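/- arXiv:1109.3983 — 4 statements merged into one kernel-verified Lean document; each statement's English description precedes it below -/
import Mathlib

section
/- For every integer k with 0 ≤ k ≤ n, the linear map x ↦ ω^{n−k} ∧ x restricts to a bijection from ⋀^k(ℝ^{2n}) onto ⋀^{2n−k}(ℝ^{2n}). -/
open scoped BigOperators

noncomputable section

/-- The exterior algebra `⋀(ℝ^{2n})`, represented concretely: an element is given by its
coordinates in the basis of wedge monomials indexed by subsets of `Fin (2*n)`
(the first `n` basis indices correspond to `dx_1, …, dx_n`, the last `n` to `dξ_1, …, dξ_n`). -/
abbrev SForm (n : ℕ) := Finset (Fin (2 * n)) → ℝ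

/-- The inner product making the wedge monomials an orthonormal basis. -/
def sip {n : ℕ} (x y : SForm n) : ℝ := ∑ s : Finset (Fin (2 * n)), x s * y s

/-- The wedge product, written in coordinates over the monomial basis; the sign
counts the inversions between the two index sets. -/
def wedge {n : ℕ} (x y : SForm n) : SForm n := fun s =>
  ∑ a ∈ s.powerset,
    (-1 : ℝ) ^ (((a ×ˢ (s \ a)).filter fun q => q.2 < q.1).card) * x a * y (s \ a)

/-- `x` is a `k`-form: it is supported on monomials of degree `k`. -/
def IsForm {n : ℕ} (k : ℕ) (x : SForm n) : Prop := ∀ s, x s ≠ 0 → s.card = k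

/-- Index of `dx_i` among the `2n` basis vectors. -/
def dxI (n : ℕ) (i : Fin n) : Fin (2 * n) := ⟨i.1, by have := i.2; omega⟩

/-- Index of `dξ_i` among the `2n` basis vectors. -/
def dxiI (n : ℕ) (i : Fin n) : Fin (2 * n) := ⟨n + i.1, by have := i.2; omega⟩

/-- The basic one-form `dx_i`. -/
def sDx (n : ℕ) (i : Fin n) : SForm n := fun s => if s = {dxI n i} then 1 else 0

/-- The basic one-form `dξ_i`. -/
def sDxi (n : ℕ) (i : Fin n) : SForm n := fun s => if s = {dxiI n i} then 1 else 0

/-- The unit `1` of the exterior algebra. -/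
def sOne (n : ℕ) : SForm n := fun s => if s = ∅ then 1 else 0

/-- The standard Kähler form `ω = Σ_i dx_i ∧ dξ_i`. -/
def omegaF (n : ℕ) : SForm n := ∑ i : Fin n, wedge (sDx n i) (sDxi n i)

/-- The Lefschetz operator `L = ω ∧ ·`. -/
def Lop (n : ℕ) (x : SForm n) : SForm n := wedge (omegaF n) x

/-- The iterate `L^m`. -/
def Lpow (n : ℕ) (m : ℕ) (x : SForm n) : SForm n := (Lop n)^[m] x

/-- The power `ω^m`. -/
def omegaPow (n : ℕ) (m : ℕ) : SForm n := Lpow n m (sOne n)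

/-- `ω_n = ω^n / n!`, the volume form. -/
def omegaTop (n : ℕ) : SForm n := ((n.factorial : ℝ))⁻¹ • omegaPow n n

/-!
Write `L = ω ∧ ·`. Since `ω = ∑ᵢ e_{Pᵢ}` with `Pᵢ = {dxᵢ, dξᵢ}`, `L` is the sum of the operators
`e_{Pᵢ} ∧ ·`; let `Λ` be the sum of the contractions by the `e_{Pᵢ}`. Wedging with `e_{Pⱼ}` commutes
with contracting by `e_{Pᵢ}` for `i ≠ j`, while on a monomial `e_s` the commutator for `i = j` is
multiplication by `[Pᵢ ∩ s = ∅] - [Pᵢ ⊆ s]`; summing over `i` gives `[Λ, L] = n - k` on `k`-forms.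
Iterating, `Λ L^{j+1} = L^{j+1} Λ + (j+1)(n-k-j) L^j` on `k`-forms, so by induction on `j` a
`k`-form killed by `L^j` with `j + k ≤ n` lies in `L(⋀^{k-2})`. Applied with `j = n - k`, induction
on `k` shows that `L^{n-k}` is injective on `⋀^k`. Complementing index sets shows
`dim ⋀^k = dim ⋀^{2n-k}`, so `L^{n-k}` is bijective.
-/

open Finset

theorem LinearMap.bijOn_of_injOn_of_finrank_eq {K V W : Type*} [DivisionRing K] [AddCommGroup V]
    [Module K V] [AddCommGroup W] [Module K W] {f : V →ₗ[K] W} {p : Submodule K V}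
    {q : Submodule K W} [FiniteDimensional K p] [FiniteDimensional K q] (hmaps : Set.MapsTo f p q)
    (hinj : Set.InjOn f p) (hpq : Module.finrank K p = Module.finrank K q) : Set.BijOn f p q :=
  ⟨hmaps, hinj, hmaps.restrict_surjective_iff.mp <|
    (injective_iff_surjective_of_finrank_eq_finrank hpq (f := f.restrict hmaps)).mp
      (hmaps.restrict_inj.mpr hinj)⟩

namespace Finset

lemma ite_disjoint_sub_ite_subset {α : Type*} [DecidableEq α] {a b : α} (hab : a ≠ b)
    (s : Finset α) :
    ((if Disjoint {a, b} s then 1 else 0) - (if {a, b} ⊆ s then 1 else 0) : ℝ)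
      = 1 - (s ∩ {a, b}).card := by
  by_cases ha : a ∈ s <;> by_cases hb : b ∈ s <;> norm_num [ha, hb, hab, insert_subset_iff]

variable {α : Type*} [LinearOrder α]

def invCount (a b : Finset α) : ℕ := ((a ×ˢ b).filter fun q => q.2 < q.1).card

def invSign (a b : Finset α) : ℝ := (-1) ^ invCount a b

lemma invCount_union_left {a b c : Finset α} (h : Disjoint a b) :
    invCount (a ∪ b) c = invCount a c + invCount b c := by
  rw [invCount, union_product, filter_union, card_union_of_disjoint (disjoint_filter_filter
    (disjoint_product.mpr (Or.inl h)))]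
  rfl

lemma invCount_union_right {a b c : Finset α} (h : Disjoint b c) :
    invCount a (b ∪ c) = invCount a b + invCount a c := by
  rw [invCount, product_union, filter_union, card_union_of_disjoint (disjoint_filter_filter
    (disjoint_product.mpr (Or.inr h)))]
  rfl

lemma invCount_add_invCount {a b : Finset α} (h : Disjoint a b) :
    invCount a b + invCount b a = a.card * b.card := by
  have hswap : invCount b a = ((a ×ˢ b).filter fun q => ¬ q.2 < q.1).card := by
    refine card_nbij' Prod.swap Prod.swap ?_ ?_ (fun _ _ => rfl) (fun _ _ => rfl)
    · rintro ⟨y, x⟩ hq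
      simp only [coe_filter, mem_product, Set.mem_ofPred_eq] at hq ⊢
      exact ⟨⟨hq.1.2, hq.1.1⟩, hq.2.not_gt⟩
    · rintro ⟨x, y⟩ hq
      simp only [coe_filter, mem_product, Set.mem_ofPred_eq, not_lt] at hq ⊢
      exact ⟨⟨hq.1.2, hq.1.1⟩, hq.2.lt_of_ne fun hxy => disjoint_left.mp h hq.1.1 (hxy ▸ hq.1.2)⟩
  rw [hswap, invCount, card_filter_add_card_filter_not, card_product]

lemma invSign_union_left {a b c : Finset α} (h : Disjoint a b) :
    invSign (a ∪ b) c = invSign a c * invSign b c := by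
  rw [invSign, invCount_union_left h, pow_add, invSign, invSign]

lemma invSign_union_right {a b c : Finset α} (h : Disjoint b c) :
    invSign a (b ∪ c) = invSign a b * invSign a c := by
  rw [invSign, invCount_union_right h, pow_add, invSign, invSign]

lemma invSign_mul_self (a b : Finset α) : invSign a b * invSign a b = 1 := by
  rw [← sq, invSign, ← pow_mul, mul_comm, pow_mul, neg_one_sq, one_pow]

lemma invSign_mul_invSign {a b : Finset α} (h : Disjoint a b) :
    invSign a b * invSign b a = (-1) ^ (a.card * b.card) := by
  rw [invSign, invSign, ← pow_add, invCount_add_invCount h]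

lemma invSign_singleton_singleton {a b : α} (h : a < b) : invSign {a} {b} = 1 := by
  simp [invSign, invCount, filter_singleton, h.not_gt]

end Finset

namespace SForm

variable {n : ℕ}

lemma wedge_apply (x y : SForm n) (s : Finset (Fin (2 * n))) :
    wedge x y s = ∑ a ∈ s.powerset, invSign a (s \ a) * x a * y (s \ a) := rfl

variable (n) in
def wedgeBilin : SForm n →ₗ[ℝ] SForm n →ₗ[ℝ] SForm n :=
  LinearMap.mk₂ ℝ wedge
    (fun x y z => by funext s; simp [wedge_apply, mul_add, add_mul, sum_add_distrib])
    (fun c x y => by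
      funext s; simp only [wedge_apply, Pi.smul_apply, smul_eq_mul, mul_sum]
      exact sum_congr rfl fun _ _ => by ring)
    (fun x y z => by funext s; simp [wedge_apply, mul_add, sum_add_distrib])
    (fun c x y => by
      funext s; simp only [wedge_apply, Pi.smul_apply, smul_eq_mul, mul_sum]
      exact sum_congr rfl fun _ _ => by ring)

lemma wedge_single_apply (a : Finset (Fin (2 * n))) (x : SForm n) (s : Finset (Fin (2 * n))) :
    wedge (Pi.single a 1) x s = if a ⊆ s then invSign a (s \ a) * x (s \ a) else 0 := by
  simp [wedge_apply, Pi.single_apply]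

lemma sOne_eq_single : sOne n = Pi.single ∅ 1 := by
  funext s; simp [sOne, Pi.single_apply]

lemma sOne_wedge (x : SForm n) : wedge (sOne n) x = x := by
  funext s; simp [sOne_eq_single, wedge_single_apply, invSign, invCount]

lemma wedge_single_singleton_of_lt {a b : Fin (2 * n)} (h : a < b) :
    wedge (Pi.single {a} 1) (Pi.single {b} 1) = (Pi.single {a, b} 1 : SForm n) := by
  funext s
  rw [wedge_single_apply]
  by_cases hs : s = {a, b}
  · have hsd : ({a, b} : Finset (Fin (2 * n))) \ {a} = {b} := by grind
    simp [hs, hsd, h.ne, invSign_singleton_singleton h]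
  · have hab : ¬ (a ∈ s ∧ s \ {a} = {b}) := fun ⟨ha, hsb⟩ =>
      hs (by rw [← insert_erase ha, ← sdiff_singleton_eq_erase, hsb])
    simp only [Pi.single_apply, hs, if_false, singleton_subset_iff]
    split_ifs <;> simp_all

lemma wedge_assoc (x y z : SForm n) : wedge (wedge x y) z = wedge x (wedge y z) := by
  funext s
  simp only [wedge_apply, sum_mul, mul_sum]
  rw [sum_sigma', sum_sigma']
  refine sum_nbij' (fun p => ⟨p.2, p.1 \ p.2⟩) (fun q => ⟨q.1 ∪ q.2, q.1⟩) ?_ ?_ ?_ ?_ ?_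
  · rintro ⟨a, b⟩ h
    simp only [mem_sigma, mem_powerset] at h ⊢
    exact ⟨h.2.trans h.1, sdiff_subset_sdiff h.1 le_rfl⟩
  · rintro ⟨b, c⟩ h
    simp only [mem_sigma, mem_powerset] at h ⊢
    exact ⟨union_subset h.1 (h.2.trans sdiff_subset), subset_union_left⟩
  · rintro ⟨a, b⟩ h
    simp only [mem_sigma, mem_powerset] at h
    simp [union_sdiff_of_subset h.2]
  · rintro ⟨b, c⟩ h
    simp only [mem_sigma, mem_powerset] at h
    simp [union_sdiff_cancel_left (disjoint_of_subset_right h.2 disjoint_sdiff)]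
  · rintro ⟨a, b⟩ h
    obtain ⟨has, hba⟩ : a ⊆ s ∧ b ⊆ a := by simpa only [mem_sigma, mem_powerset] using h
    have hd : Disjoint (a \ b) (s \ a) := disjoint_of_subset_left sdiff_subset disjoint_sdiff
    have hsb : s \ b = (a \ b) ∪ (s \ a) := by rw [union_comm, sdiff_union_sdiff_cancel has hba]
    have hsign : invSign a (s \ a) = invSign b (s \ a) * invSign (a \ b) (s \ a) := by
      rw [← invSign_union_left disjoint_sdiff, union_sdiff_of_subset hba]
    rw [hsb, union_sdiff_cancel_left hd, invSign_union_right hd, hsign]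
    ring


def monomialWedge (P : Finset (Fin (2 * n))) : Module.End ℝ (SForm n) :=
  wedgeBilin n (Pi.single P 1)

lemma monomialWedge_apply (P : Finset (Fin (2 * n))) (x : SForm n) (s : Finset (Fin (2 * n))) :
    monomialWedge P x s = if P ⊆ s then invSign P (s \ P) * x (s \ P) else 0 :=
  wedge_single_apply P x s

def monomialContract (P : Finset (Fin (2 * n))) : Module.End ℝ (SForm n) where
  toFun x s := if Disjoint P s then invSign P s * x (s ∪ P) else 0
  map_add' x y := by funext s; simp only [Pi.add_apply]; split_ifs <;> ring
  map_smul' c x := by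
    funext s; simp only [Pi.smul_apply, smul_eq_mul, RingHom.id_apply]; split_ifs <;> ring

lemma monomialContract_apply (P : Finset (Fin (2 * n))) (x : SForm n) (s : Finset (Fin (2 * n))) :
    monomialContract P x s = if Disjoint P s then invSign P s * x (s ∪ P) else 0 := rfl

lemma monomialContract_monomialWedge_apply (P : Finset (Fin (2 * n))) (x : SForm n)
    (s : Finset (Fin (2 * n))) :
    monomialContract P (monomialWedge P x) s = if Disjoint P s then x s else 0 := by
  rw [monomialContract_apply]
  split_ifs with h
  · rw [monomialWedge_apply, if_pos subset_union_right, union_sdiff_cancel_right h.symm,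
      ← mul_assoc, invSign_mul_self, one_mul]
  · rfl

lemma monomialWedge_monomialContract_apply (P : Finset (Fin (2 * n))) (x : SForm n)
    (s : Finset (Fin (2 * n))) :
    monomialWedge P (monomialContract P x) s = if P ⊆ s then x s else 0 := by
  rw [monomialWedge_apply]
  split_ifs with h
  · rw [monomialContract_apply, if_pos disjoint_sdiff, sdiff_union_of_subset h,
      ← mul_assoc, invSign_mul_self, one_mul]
  · rfl

lemma commute_monomialContract_monomialWedge {P Q : Finset (Fin (2 * n))} (hPQ : Disjoint P Q)
    (hsign : invSign P Q * invSign Q P = 1) :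
    Commute (monomialContract P) (monomialWedge Q) := by
  refine LinearMap.ext fun x => funext fun s => ?_
  have hcond : (Disjoint P s ∧ Q ⊆ s ∪ P) ↔ (Q ⊆ s ∧ Disjoint P (s \ Q)) := by
    constructor
    · rintro ⟨hP, hQ⟩
      exact ⟨fun t ht => (mem_union.mp (hQ ht)).resolve_right (disjoint_right.mp hPQ ht),
        disjoint_of_subset_right sdiff_subset hP⟩
    · rintro ⟨hQs, hPs⟩
      refine ⟨?_, hQs.trans subset_union_left⟩
      simpa [sdiff_union_of_subset hQs] using disjoint_union_right.mpr ⟨hPs, hPQ⟩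
  simp only [Module.End.mul_apply, monomialContract_apply, monomialWedge_apply, mul_ite, mul_zero,
    ← ite_and, hcond]
  split_ifs with h
  · obtain ⟨hQs, hPs⟩ := h
    have hset : (s ∪ P) \ Q = (s \ Q) ∪ P := by
      rw [union_sdiff_distrib, sdiff_eq_self_of_disjoint hPQ]
    have hsignP : invSign P s = invSign P (s \ Q) * invSign P Q := by
      rw [← invSign_union_right sdiff_disjoint, sdiff_union_of_subset hQs]
    rw [hset, invSign_union_right hPs.symm, hsignP]
    linear_combination invSign P (s \ Q) * invSign Q (s \ Q) * x (s \ Q ∪ P) * hsign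
  · rfl

variable (n) in
def pair (i : Fin n) : Finset (Fin (2 * n)) := {dxI n i, dxiI n i}

lemma dxI_lt_dxiI (i : Fin n) : dxI n i < dxiI n i := by
  rw [Fin.lt_def]; simp only [dxI, dxiI]; omega

lemma card_pair (i : Fin n) : (pair n i).card = 2 :=
  Finset.card_pair (dxI_lt_dxiI i).ne

variable (n) in
def pairIndex (t : Fin (2 * n)) : Fin n :=
  if h : t.1 < n then ⟨t.1, h⟩ else ⟨t.1 - n, by omega⟩

lemma mem_pair_iff {t : Fin (2 * n)} {i : Fin n} : t ∈ pair n i ↔ pairIndex n t = i := by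
  simp only [pair, pairIndex, mem_insert, mem_singleton, Fin.ext_iff, dxI, dxiI]
  split_ifs <;> simp only [] <;> omega

lemma disjoint_pair {i j : Fin n} (h : i ≠ j) : Disjoint (pair n i) (pair n j) :=
  disjoint_left.mpr fun _ hi hj => h ((mem_pair_iff.mp hi).symm.trans (mem_pair_iff.mp hj))

lemma invSign_pair_mul_invSign_pair {i j : Fin n} (h : i ≠ j) :
    invSign (pair n i) (pair n j) * invSign (pair n j) (pair n i) = 1 := by
  rw [invSign_mul_invSign (disjoint_pair h), card_pair, card_pair]
  norm_num

lemma sum_card_inter_pair (s : Finset (Fin (2 * n))) :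
    ∑ i, (s ∩ pair n i).card = s.card := by
  rw [card_eq_sum_card_fiberwise (f := pairIndex n) (t := univ) fun _ _ => mem_univ _]
  refine sum_congr rfl fun i _ => congrArg card ?_
  ext t
  simp [mem_pair_iff]

lemma sum_ite_disjoint_sub_ite_subset (s : Finset (Fin (2 * n))) :
    ∑ i, ((if Disjoint (pair n i) s then 1 else 0) - (if pair n i ⊆ s then 1 else 0) : ℝ)
      = n - s.card := by
  calc _ = ∑ i, (1 - ((s ∩ pair n i).card : ℝ)) :=
        sum_congr rfl fun i _ => ite_disjoint_sub_ite_subset (dxI_lt_dxiI i).ne s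
    _ = n - s.card := by simp [sum_sub_distrib, ← Nat.cast_sum, sum_card_inter_pair]

lemma wedge_sDx_sDxi (i : Fin n) : wedge (sDx n i) (sDxi n i) = Pi.single (pair n i) 1 := by
  have hdx : sDx n i = Pi.single {dxI n i} 1 := by funext s; simp [sDx, Pi.single_apply]
  have hdxi : sDxi n i = Pi.single {dxiI n i} 1 := by funext s; simp [sDxi, Pi.single_apply]
  rw [hdx, hdxi, wedge_single_singleton_of_lt (dxI_lt_dxiI i), pair]

variable (n) in
def lefschetz : Module.End ℝ (SForm n) := wedgeBilin n (omegaF n)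

variable (n) in
def dualLefschetz : Module.End ℝ (SForm n) := ∑ i, monomialContract (pair n i)

lemma lefschetz_eq_sum : lefschetz n = ∑ i, monomialWedge (pair n i) := by
  simp only [lefschetz, omegaF, wedge_sDx_sDxi, map_sum, monomialWedge]

lemma dualLefschetz_mul_lefschetz_sub_apply (x : SForm n) (s : Finset (Fin (2 * n))) :
    (dualLefschetz n * lefschetz n - lefschetz n * dualLefschetz n) x s = (n - s.card) * x s := by
  have hdiag : dualLefschetz n * lefschetz n - lefschetz n * dualLefschetz n
      = ∑ i, (monomialContract (pair n i) * monomialWedge (pair n i)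
          - monomialWedge (pair n i) * monomialContract (pair n i)) := by
    rw [dualLefschetz, lefschetz_eq_sum, sum_mul_sum, sum_mul_sum,
      sum_comm (s := univ) (t := univ), ← sum_sub_distrib]
    refine sum_congr rfl fun i _ => ?_
    rw [← sum_sub_distrib]
    refine sum_eq_single i (fun j _ hji => sub_eq_zero.mpr ?_) (by simp)
    exact (commute_monomialContract_monomialWedge (disjoint_pair hji)
      (invSign_pair_mul_invSign_pair hji)).eq
  simp only [hdiag, LinearMap.coe_sum, Finset.sum_apply, LinearMap.sub_apply,
    Module.End.mul_apply, Pi.sub_apply, monomialContract_monomialWedge_apply,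
    monomialWedge_monomialContract_apply, ← sum_ite_disjoint_sub_ite_subset s, sum_mul]
  refine sum_congr rfl fun i _ => ?_
  split_ifs <;> ring

variable (n) in
def forms (k : ℕ) : Submodule ℝ (SForm n) where
  carrier := {x | IsForm k x}
  add_mem' {x y} hx hy s hs := by
    by_cases hxs : x s = 0
    · exact hy s (by simpa [hxs] using hs)
    · exact hx s hxs
  zero_mem' _ hs := absurd rfl hs
  smul_mem' c x hx s hs := hx s (right_ne_zero_of_mul hs)

lemma mem_forms {k : ℕ} {x : SForm n} : x ∈ forms n k ↔ IsForm k x := Iff.rfl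

lemma eq_zero_of_mem_forms_of_mem_forms {k l : ℕ} {x : SForm n} (hk : x ∈ forms n k)
    (hl : x ∈ forms n l) (hkl : k ≠ l) : x = 0 :=
  funext fun s => by_contra fun hs => hkl ((hk s hs).symm.trans (hl s hs))

lemma exists_of_lefschetz_apply_ne_zero {y : SForm n} {s : Finset (Fin (2 * n))}
    (h : lefschetz n y s ≠ 0) : ∃ t, y t ≠ 0 ∧ t.card + 2 = s.card := by
  rw [lefschetz_eq_sum, LinearMap.coe_sum, Finset.sum_apply, Finset.sum_apply] at h
  obtain ⟨i, -, hi⟩ := exists_ne_zero_of_sum_ne_zero h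
  rw [monomialWedge_apply] at hi
  split_ifs at hi with hsub
  · refine ⟨s \ pair n i, right_ne_zero_of_mul hi, ?_⟩
    have hle := card_le_card hsub
    rw [card_pair] at hle
    rw [card_sdiff_of_subset hsub, card_pair]
    omega
  · exact absurd rfl hi

lemma exists_of_dualLefschetz_apply_ne_zero {y : SForm n} {s : Finset (Fin (2 * n))}
    (h : dualLefschetz n y s ≠ 0) : ∃ t, y t ≠ 0 ∧ s.card + 2 = t.card := by
  rw [dualLefschetz, LinearMap.coe_sum, Finset.sum_apply, Finset.sum_apply] at h
  obtain ⟨i, -, hi⟩ := exists_ne_zero_of_sum_ne_zero h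
  rw [monomialContract_apply] at hi
  split_ifs at hi with hdisj
  · refine ⟨s ∪ pair n i, right_ne_zero_of_mul hi, ?_⟩
    rw [card_union_of_disjoint hdisj.symm, card_pair]
  · exact absurd rfl hi

lemma lefschetz_mem_forms {k : ℕ} {x : SForm n} (hx : x ∈ forms n k) :
    lefschetz n x ∈ forms n (k + 2) := fun s hs => by
  obtain ⟨t, ht, hcard⟩ := exists_of_lefschetz_apply_ne_zero hs
  rw [← hcard, hx t ht]

lemma lefschetz_pow_mem_forms {k : ℕ} {x : SForm n} (hx : x ∈ forms n k) (m : ℕ) :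
    (lefschetz n ^ m) x ∈ forms n (k + 2 * m) := by
  induction m with
  | zero => simpa using hx
  | succ m ih =>
    rw [pow_succ', Module.End.mul_apply, mul_add_one, ← add_assoc]
    exact lefschetz_mem_forms ih

lemma dualLefschetz_mem_forms {k : ℕ} {x : SForm n} (hx : x ∈ forms n k) :
    dualLefschetz n x ∈ forms n (k - 2) := fun s hs => by
  obtain ⟨t, ht, hcard⟩ := exists_of_dualLefschetz_apply_ne_zero hs
  have := hx t ht
  omega

lemma lefschetz_dualLefschetz_mem_forms {k : ℕ} {x : SForm n} (hx : x ∈ forms n k) :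
    lefschetz n (dualLefschetz n x) ∈ forms n k := fun s hs => by
  obtain ⟨t, ht, hcard⟩ := exists_of_lefschetz_apply_ne_zero hs
  obtain ⟨u, hu, hcard'⟩ := exists_of_dualLefschetz_apply_ne_zero ht
  have := hx u hu
  omega

lemma dualLefschetz_lefschetz_apply {k : ℕ} {x : SForm n} (hx : x ∈ forms n k) :
    dualLefschetz n (lefschetz n x) = lefschetz n (dualLefschetz n x) + ((n : ℝ) - k) • x := by
  rw [← sub_eq_iff_eq_add', ← Module.End.mul_apply, ← Module.End.mul_apply,
    ← LinearMap.sub_apply]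
  funext s
  rw [dualLefschetz_mul_lefschetz_sub_apply, Pi.smul_apply, smul_eq_mul]
  by_cases hs : x s = 0
  · rw [hs, mul_zero, mul_zero]
  · rw [hx s hs]

lemma dualLefschetz_lefschetz_pow_succ_apply {k : ℕ} {x : SForm n} (hx : x ∈ forms n k)
    (r : ℕ) :
    dualLefschetz n ((lefschetz n ^ (r + 1)) x) = (lefschetz n ^ (r + 1)) (dualLefschetz n x)
      + (((r : ℝ) + 1) * (n - k - r)) • (lefschetz n ^ r) x := by
  induction r with
  | zero => simpa using dualLefschetz_lefschetz_apply hx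
  | succ r ih =>
    rw [pow_succ' _ (r + 1), Module.End.mul_apply,
      dualLefschetz_lefschetz_apply (lefschetz_pow_mem_forms hx (r + 1)), ih, map_add, map_smul]
    rw [← Module.End.mul_apply (lefschetz n) (lefschetz n ^ (r + 1)), ← pow_succ',
      ← Module.End.mul_apply (lefschetz n) (lefschetz n ^ r), ← pow_succ', add_assoc, ← add_smul]
    congr 2
    push_cast
    ring

lemma mem_map_lefschetz_of_lefschetz_pow_apply_eq_zero {k j : ℕ} (hjk : j + k ≤ n)
    {x : SForm n} (hx : x ∈ forms n k) (h : (lefschetz n ^ j) x = 0) :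
    x ∈ (forms n (k - 2)).map (lefschetz n) := by
  induction j generalizing x with
  | zero =>
    rw [pow_zero, Module.End.one_apply] at h
    exact h ▸ zero_mem _
  | succ j ih =>
    set c : ℝ := ((j : ℝ) + 1) * (n - k - j)
    have hc : c ≠ 0 := by
      have : (j : ℝ) + 1 + k ≤ n := by exact_mod_cast hjk
      exact mul_ne_zero (by positivity) (by linarith)
    have hx' : c • x + lefschetz n (dualLefschetz n x) ∈ forms n k :=
      add_mem (Submodule.smul_mem _ _ hx) (lefschetz_dualLefschetz_mem_forms hx)
    have h' : (lefschetz n ^ j) (c • x + lefschetz n (dualLefschetz n x)) = 0 := by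
      have := dualLefschetz_lefschetz_pow_succ_apply hx j
      rw [h, map_zero] at this
      rw [map_add, map_smul, ← Module.End.mul_apply, ← pow_succ, add_comm, this]
    obtain ⟨z, hz, hLz⟩ := ih (by omega) hx' h'
    refine ⟨c⁻¹ • (z - dualLefschetz n x),
      Submodule.smul_mem _ _ (sub_mem hz (dualLefschetz_mem_forms hx)), ?_⟩
    rw [map_smul, map_sub, hLz, add_sub_cancel_right, inv_smul_smul₀ hc]

lemma eq_zero_of_lefschetz_pow_apply_eq_zero {k : ℕ} (hk : k ≤ n) {x : SForm n}
    (hx : x ∈ forms n k) (h : (lefschetz n ^ (n - k)) x = 0) : x = 0 := by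
  induction k using Nat.strong_induction_on generalizing x with
  | _ k ih =>
    obtain ⟨z, hz, rfl⟩ := mem_map_lefschetz_of_lefschetz_pow_apply_eq_zero (by omega) hx h
    rcases lt_or_ge k 2 with hk2 | hk2
    · -- `k - 2` truncates to `0`, so `L z` is both a `k`-form and a `2`-form
      exact eq_zero_of_mem_forms_of_mem_forms hx (lefschetz_mem_forms hz) (by omega)
    · have hz0 : (lefschetz n ^ (n - (k - 2))) z = 0 := by
        rw [show n - (k - 2) = n - k + 1 + 1 by omega, pow_succ, pow_succ', Module.End.mul_apply,
          Module.End.mul_apply, h, map_zero]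
      rw [ih (k - 2) (by omega) (by omega) hz hz0, map_zero]

lemma injOn_lefschetz_pow {k : ℕ} (hk : k ≤ n) :
    Set.InjOn (lefschetz n ^ (n - k)) (forms n k) := fun x hx y hy hxy =>
  sub_eq_zero.mp <| eq_zero_of_lefschetz_pow_apply_eq_zero hk (sub_mem hx hy) <| by
    rw [map_sub, hxy, sub_self]

variable (n) in
def complEquiv : SForm n ≃ₗ[ℝ] SForm n :=
  LinearEquiv.funCongrLeft ℝ ℝ (compl_involutive.toPerm _)

lemma map_complEquiv_forms {k : ℕ} (hk : k ≤ 2 * n) :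
    (forms n k).map (complEquiv n : SForm n →ₗ[ℝ] SForm n) = forms n (2 * n - k) := by
  ext x
  rw [Submodule.map_equiv_eq_comap_symm, Submodule.mem_comap, mem_forms, mem_forms]
  have hcard (s : Finset (Fin (2 * n))) : sᶜ.card = 2 * n - s.card := by
    rw [card_compl, Fintype.card_fin]
  have hle (s : Finset (Fin (2 * n))) : s.card ≤ 2 * n :=
    (card_le_univ s).trans_eq (Fintype.card_fin _)
  constructor
  · intro hx s hs
    have := hx sᶜ (by change x sᶜᶜ ≠ 0; rwa [compl_compl])
    have := hle s
    have := hcard s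
    omega
  · intro hx s hs
    have := hx sᶜ hs
    have := hle s
    have := hcard s
    omega

lemma finrank_forms_eq {k : ℕ} (hk : k ≤ 2 * n) :
    Module.finrank ℝ (forms n k) = Module.finrank ℝ (forms n (2 * n - k)) := by
  rw [← map_complEquiv_forms hk, LinearEquiv.finrank_map_eq]

lemma wedge_omegaPow (m : ℕ) (x : SForm n) : wedge (omegaPow n m) x = (lefschetz n ^ m) x := by
  induction m generalizing x with
  | zero => exact sOne_wedge x
  | succ m ih =>
    rw [omegaPow, Lpow, Function.iterate_succ_apply', ← Lpow, ← omegaPow, Lop, wedge_assoc, ih,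
      pow_succ', Module.End.mul_apply]
    rfl

lemma bijOn_lefschetz_pow {k : ℕ} (hk : k ≤ n) :
    Set.BijOn (lefschetz n ^ (n - k)) (forms n k) (forms n (2 * n - k)) := by
  refine LinearMap.bijOn_of_injOn_of_finrank_eq (fun x hx => ?_) (injOn_lefschetz_pow hk)
    (finrank_forms_eq (by omega))
  simpa [show k + 2 * (n - k) = 2 * n - k by omega] using lefschetz_pow_mem_forms hx (n - k)

end SForm

theorem lefschetz_bijOn_general (n k : ℕ) (hk : k ≤ n) :
    Set.BijOn (fun x : SForm n => wedge (omegaPow n (n - k)) x)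
      {x : SForm n | IsForm k x} {y : SForm n | IsForm (2 * n - k) y} := by
  have hL : (fun x : SForm n => wedge (omegaPow n (n - k)) x) = ⇑(SForm.lefschetz n ^ (n - k)) :=
    funext (SForm.wedge_omegaPow (n - k))
  exact hL ▸ SForm.bijOn_lefschetz_pow hk

/-- Lefschetz isomorphism: for `0 ≤ k ≤ n`, the map `x ↦ ω^{n−k} ∧ x`
restricts to a bijection from the `k`-forms onto the `(2n−k)`-forms. -/
theorem lefschetz_bijOn (n k : ℕ) (hn : 1 ≤ n) (hk : k ≤ n) :
    Set.BijOn (fun x : SForm n => wedge (omegaPow n (n - k)) x)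
      {x : SForm n | IsForm k x} {y : SForm n | IsForm (2 * n - k) y} :=
  lefschetz_bijOn_general n k hk
end
end

section
/- Every k-form x ∈ ⋀^k(ℝ^{2n}) can be written as x = x₀ + L x₁ + L² x₂ + … + L^s x_s for some s, where each x_j ∈ ⋀^{k−2j}(ℝ^{2n}) is primitive (Λ x_j = 0), and the terms L^j x_j of the sum are pairwise orthogonal. -/
open scoped BigOperators

noncomputable section

/-!
Write `ω = ∑ i, dx_i ∧ dξ_i`, so that `L = ∑ i, L_i` and its adjoint `Λ = ∑ i, Λ_i`, where `L_i`
wedges with `dx_i ∧ dξ_i` and `Λ_i` contracts with it. For `i ≠ j` the operators `Λ_i` and `L_j`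
commute, while `Λ_i L_i - L_i Λ_i` multiplies the monomial `e_t` by `1` if `t` avoids
`{dx_i, dξ_i}` and by `-1` if it contains it; summing over `i` gives `[Λ, L] = n - k` on
`k`-forms. Hence `Λ L^(m+1) p = (m+1)(n-d-m) L^m p` for a primitive `d`-form `p`, and moving
one `L` at a time across the inner product shows `L^i a ⊥ L^j b` for primitive `a`, `b` and
`i < j`.

The decomposition is built by induction on `k`: split `x = p + L y` orthogonally with respect
to `L(⋀^(k-2))`. Then `Λ p` is a `(k-2)`-form, so `|Λ p|² = ⟨p, L Λ p⟩ = 0` and `p` is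
primitive.
-/

lemma Submodule.exists_add_mem_dotProduct_eq_zero {ι : Type*} [Fintype ι]
    (W : Submodule ℝ (ι → ℝ)) (x : ι → ℝ) :
    ∃ w ∈ W, ∃ p : ι → ℝ, x = w + p ∧ ∀ v ∈ W, v ⬝ᵥ p = 0 := by
  let e := WithLp.linearEquiv 2 ℝ (ι → ℝ)
  obtain ⟨w, hw, p, hp, hx⟩ :=
    (W.comap (e : EuclideanSpace ℝ ι →ₗ[ℝ] ι → ℝ)).exists_add_mem_mem_orthogonal (e.symm x)
  refine ⟨e w, hw, e p, by rw [← map_add, ← hx, LinearEquiv.apply_symm_apply], fun v hv => ?_⟩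
  have := (Submodule.mem_orthogonal' _ _).1 hp (e.symm v) (by simpa using hv)
  rw [EuclideanSpace.inner_eq_star_dotProduct, star_trivial] at this
  exact this

namespace PrimitiveDecomposition

open Finset

section InversionSign

variable {ι : Type*} [LinearOrder ι]

/-- The sign in `e_a ∧ e_u = inversionSign a u • e_{a ∪ u}` for disjoint `a`, `u`. -/
def inversionSign (a u : Finset ι) : ℝ := ∏ p ∈ a, ∏ q ∈ u, if q < p then -1 else 1

lemma neg_one_pow_card_inversions (a u : Finset ι) :
    (-1 : ℝ) ^ ((a ×ˢ u).filter fun q => q.2 < q.1).card = inversionSign a u := by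
  rw [card_filter, ← prod_pow_eq_pow_sum, prod_product, inversionSign]
  simp only [pow_ite, pow_one, pow_zero]

lemma inversionSign_union {a u v : Finset ι} (h : Disjoint u v) :
    inversionSign a (u ∪ v) = inversionSign a u * inversionSign a v := by
  simp only [inversionSign, prod_union h, prod_mul_distrib]

lemma inversionSign_sdiff_mul {a u v : Finset ι} (h : v ⊆ u) :
    inversionSign a (u \ v) * inversionSign a v = inversionSign a u := by
  rw [← inversionSign_union disjoint_sdiff_self_left, sdiff_union_of_subset h]

lemma inversionSign_mul_self (a u : Finset ι) : inversionSign a u * inversionSign a u = 1 := by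
  simp only [inversionSign, ← prod_mul_distrib]
  exact prod_eq_one fun _ _ => prod_eq_one fun _ _ => by split_ifs <;> norm_num

end InversionSign

variable {n : ℕ}

def pair (i : Fin n) : Finset (Fin (2 * n)) := {dxI n i, dxiI n i}

lemma dxI_lt_dxiI (i j : Fin n) : dxI n i < dxiI n j := by
  simp only [Fin.lt_def, dxI, dxiI]; omega

lemma mem_pair {i : Fin n} {v : Fin (2 * n)} : v ∈ pair i ↔ Fin.modNat v = i := by
  have hv := v.2
  simp only [pair, mem_insert, mem_singleton, Fin.ext_iff, dxI, dxiI, Fin.modNat]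
  rcases lt_or_ge v.1 n with h | h
  · rw [Nat.mod_eq_of_lt h]; omega
  · rw [Nat.mod_eq_sub_mod h, Nat.mod_eq_of_lt (by omega)]; omega

lemma card_pair (i : Fin n) : (pair i).card = 2 :=
  Finset.card_pair (dxI_lt_dxiI i i).ne

lemma disjoint_pair {i j : Fin n} (h : i ≠ j) : Disjoint (pair i) (pair j) :=
  disjoint_left.2 fun _ hi hj => h ((mem_pair.1 hi).symm.trans (mem_pair.1 hj))

lemma inversionSign_pair_pair {i j : Fin n} (h : i ≠ j) :
    inversionSign (pair i) (pair j) = -1 := by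
  have hlt := dxI_lt_dxiI j i
  simp only [inversionSign, pair, prod_pair (dxI_lt_dxiI i i).ne, prod_pair (dxI_lt_dxiI j j).ne,
    if_pos hlt, if_neg (dxI_lt_dxiI i j).not_gt]
  have hij : i.1 ≠ j.1 := Fin.val_ne_of_ne h
  simp only [Fin.lt_def, dxI, dxiI]
  split_ifs <;> first | omega | norm_num

lemma sum_card_pair_inter (t : Finset (Fin (2 * n))) : ∑ i, (pair i ∩ t).card = t.card := by
  rw [card_eq_sum_card_fiberwise (f := Fin.modNat) (t := univ) fun _ _ => mem_coe.2 (mem_univ _)]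
  refine sum_congr rfl fun i _ => congrArg card ?_
  ext v
  simp [mem_pair, and_comm]

lemma sum_disjoint_sub_subset (t : Finset (Fin (2 * n))) :
    ∑ i : Fin n, ((if Disjoint (pair i) t then 1 else 0) - (if pair i ⊆ t then 1 else 0) : ℝ) =
      n - t.card := by
  have key : ∀ i : Fin n, ((if Disjoint (pair i) t then 1 else 0) -
      (if pair i ⊆ t then 1 else 0) : ℝ) = 1 - (pair i ∩ t).card := by
    intro i
    have hle : (pair i ∩ t).card ≤ 2 :=
      (card_le_card inter_subset_left).trans (card_pair i).le
    have hdisj : Disjoint (pair i) t ↔ (pair i ∩ t).card = 0 := by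
      rw [card_eq_zero, disjoint_iff_inter_eq_empty]
    have hsub : pair i ⊆ t ↔ (pair i ∩ t).card = 2 := by
      refine ⟨fun h => by rw [inter_eq_left.2 h, card_pair], fun h => inter_eq_left.1 ?_⟩
      exact eq_of_subset_of_card_le inter_subset_left (by rw [h, card_pair])
    interval_cases h : (pair i ∩ t).card <;> norm_num [hdisj, hsub]
  simp only [key, sum_sub_distrib, sum_const, card_univ, Fintype.card_fin, nsmul_eq_mul, mul_one]
  rw [← Nat.cast_sum, sum_card_pair_inter]

lemma wedge_single_left (a : Finset (Fin (2 * n))) (x : SForm n) (s : Finset (Fin (2 * n))) :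
    wedge (Pi.single a 1) x s = if a ⊆ s then inversionSign a (s \ a) * x (s \ a) else 0 := by
  simp [wedge, Pi.single_apply, neg_one_pow_card_inversions]

lemma wedge_sum_left {ι : Type*} (I : Finset ι) (f : ι → SForm n) (x : SForm n) :
    wedge (∑ i ∈ I, f i) x = ∑ i ∈ I, wedge (f i) x := by
  ext s
  simp only [wedge, Finset.sum_apply, mul_sum, sum_mul]
  exact sum_comm

lemma sDx_eq_single (i : Fin n) : sDx n i = Pi.single {dxI n i} 1 := by
  ext s
  simp [sDx, Pi.single_apply]

lemma sDxi_eq_single (i : Fin n) : sDxi n i = Pi.single {dxiI n i} 1 := by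
  ext s
  simp [sDxi, Pi.single_apply]

lemma wedge_sDx_sDxi (i : Fin n) : wedge (sDx n i) (sDxi n i) = Pi.single (pair i) 1 := by
  ext s
  rw [sDx_eq_single, sDxi_eq_single, wedge_single_left, Pi.single_apply, Pi.single_apply]
  have hnotin : dxI n i ∉ ({dxiI n i} : Finset (Fin (2 * n))) := by
    simp [(dxI_lt_dxiI i i).ne]
  by_cases hmem : dxI n i ∈ s
  · have hsign : inversionSign {dxI n i} {dxiI n i} = 1 := by
      simp [inversionSign, (dxI_lt_dxiI i i).not_gt]
    have hiff : s \ {dxI n i} = {dxiI n i} ↔ s = pair i := by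
      rw [sdiff_singleton_eq_erase, pair]
      exact ⟨fun h => by rw [← insert_erase hmem, h], fun h => by rw [h, erase_insert hnotin]⟩
    simp only [singleton_subset_iff.2 hmem, if_true, hiff]
    split_ifs with h
    · rw [hiff.2 h, hsign, mul_one]
    · rw [mul_zero]
  · have hs : s ≠ pair i := by rintro rfl; exact hmem (mem_insert_self _ _)
    rw [if_neg (mt singleton_subset_iff.1 hmem), if_neg hs]

def lefschetzPart (i : Fin n) : Module.End ℝ (SForm n) where
  toFun x t := if pair i ⊆ t then inversionSign (pair i) (t \ pair i) * x (t \ pair i) else 0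
  map_add' x y := funext fun t => by dsimp only [Pi.add_apply]; split_ifs <;> ring
  map_smul' c x := funext fun t => by
    dsimp only [Pi.smul_apply, smul_eq_mul, RingHom.id_apply]; split_ifs <;> ring

def contractPart (i : Fin n) : Module.End ℝ (SForm n) where
  toFun y t := if Disjoint (pair i) t then inversionSign (pair i) t * y (t ∪ pair i) else 0
  map_add' x y := funext fun t => by dsimp only [Pi.add_apply]; split_ifs <;> ring
  map_smul' c x := funext fun t => by
    dsimp only [Pi.smul_apply, smul_eq_mul, RingHom.id_apply]; split_ifs <;> ring

lemma lefschetzPart_apply (i : Fin n) (x : SForm n) (t : Finset (Fin (2 * n))) :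
    lefschetzPart i x t =
      if pair i ⊆ t then inversionSign (pair i) (t \ pair i) * x (t \ pair i) else 0 := rfl

lemma contractPart_apply (i : Fin n) (y : SForm n) (t : Finset (Fin (2 * n))) :
    contractPart i y t =
      if Disjoint (pair i) t then inversionSign (pair i) t * y (t ∪ pair i) else 0 := rfl

variable (n) in
def lefschetz : Module.End ℝ (SForm n) := ∑ i, lefschetzPart i

variable (n) in
def contraction : Module.End ℝ (SForm n) := ∑ i, contractPart i

lemma Lop_eq_lefschetz : Lop n = lefschetz n := by
  ext x t
  simp only [Lop, omegaF, wedge_sum_left, wedge_sDx_sDxi, Finset.sum_apply, wedge_single_left,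
    lefschetz, LinearMap.sum_apply, lefschetzPart_apply]

lemma Lpow_eq_lefschetz_pow (m : ℕ) : Lpow n m = ⇑(lefschetz n ^ m) := by
  ext x : 1
  rw [Lpow, Module.End.coe_pow, Lop_eq_lefschetz]

lemma sip_eq_dotProduct (x y : SForm n) : sip x y = x ⬝ᵥ y := rfl

lemma lefschetzPart_dotProduct (i : Fin n) (x y : SForm n) :
    lefschetzPart i x ⬝ᵥ y = x ⬝ᵥ contractPart i y := by
  simp only [dotProduct, lefschetzPart_apply, contractPart_apply, ite_mul, zero_mul, mul_ite,
    mul_zero, ← sum_filter]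
  refine sum_nbij' (· \ pair i) (· ∪ pair i) ?_ ?_ ?_ ?_ ?_ <;>
    simp only [mem_filter, mem_univ, true_and]
  · exact fun _ _ => disjoint_sdiff
  · exact fun _ _ => subset_union_right
  · exact fun _ h => sdiff_union_of_subset h
  · exact fun _ h => union_sdiff_cancel_right h.symm
  · intro s h
    rw [sdiff_union_of_subset h]
    ring

lemma lefschetz_dotProduct (x y : SForm n) : lefschetz n x ⬝ᵥ y = x ⬝ᵥ contraction n y := by
  simp only [lefschetz, contraction, LinearMap.sum_apply, sum_dotProduct, dotProduct_sum,
    lefschetzPart_dotProduct]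

lemma eq_contraction_of_adjoint {Lam : SForm n → SForm n}
    (hLam : ∀ x y : SForm n, sip (Lop n x) y = sip x (Lam y)) : Lam = contraction n := by
  ext y t
  have h := hLam (Pi.single t 1) y
  rwa [sip_eq_dotProduct, sip_eq_dotProduct, Lop_eq_lefschetz, lefschetz_dotProduct,
    single_dotProduct, single_dotProduct, one_mul, one_mul, eq_comm] at h

lemma commute_contractPart_lefschetzPart {i j : Fin n} (h : i ≠ j) :
    Commute (contractPart i) (lefschetzPart j) := by
  refine LinearMap.ext fun x => funext fun t => ?_
  simp only [Module.End.mul_apply, contractPart_apply, lefschetzPart_apply]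
  have hij := disjoint_pair h
  have hsub : pair j ⊆ t ∪ pair i ↔ pair j ⊆ t := by grind [disjoint_left]
  have hdisj : Disjoint (pair i) (t \ pair j) ↔ Disjoint (pair i) t := by grind [disjoint_left]
  simp only [hsub, hdisj, union_sdiff_distrib, sdiff_eq_self_of_disjoint hij]
  by_cases hj : pair j ⊆ t
  · by_cases hi : Disjoint (pair i) t
    · have hsign_j : inversionSign (pair j) (t \ pair j ∪ pair i) =
          -inversionSign (pair j) (t \ pair j) := by
        rw [inversionSign_union (hi.symm.mono_left sdiff_subset), inversionSign_pair_pair h.symm,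
          mul_neg_one]
      have hsign_i : inversionSign (pair i) (t \ pair j) = -inversionSign (pair i) t := by
        rw [← inversionSign_sdiff_mul hj, inversionSign_pair_pair h, mul_neg_one, neg_neg]
      simp only [if_pos hi, if_pos hj, hsign_i, hsign_j]
      ring
    · simp [hi]
  · simp [hj]

lemma contractPart_lefschetzPart_self_apply (i : Fin n) (x : SForm n) (t : Finset (Fin (2 * n))) :
    contractPart i (lefschetzPart i x) t = if Disjoint (pair i) t then x t else 0 := by
  simp only [contractPart_apply, lefschetzPart_apply]
  split_ifs with h
  · rw [union_sdiff_cancel_right h.symm, ← mul_assoc, inversionSign_mul_self, one_mul]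
  · exact absurd subset_union_right ‹_›
  · rfl

lemma lefschetzPart_contractPart_self_apply (i : Fin n) (x : SForm n) (t : Finset (Fin (2 * n))) :
    lefschetzPart i (contractPart i x) t = if pair i ⊆ t then x t else 0 := by
  simp only [contractPart_apply, lefschetzPart_apply]
  split_ifs with h h'
  · rw [sdiff_union_of_subset h, ← mul_assoc, inversionSign_mul_self, one_mul]
  · exact absurd disjoint_sdiff h'
  · rfl

lemma contraction_mul_lefschetz_sub :
    contraction n * lefschetz n - lefschetz n * contraction n =
      ∑ i, (contractPart i * lefschetzPart i - lefschetzPart i * contractPart i) := by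
  rw [contraction, lefschetz, sum_mul_sum, sum_mul_sum, sum_comm (s := univ) (t := univ)
    (f := fun i j => lefschetzPart i * contractPart j), ← sum_sub_distrib]
  refine sum_congr rfl fun i _ => ?_
  rw [← sum_sub_distrib, sum_eq_single i (fun j _ hji => sub_eq_zero.2
    (commute_contractPart_lefschetzPart hji.symm).eq) (fun h => absurd (mem_univ i) h)]

lemma contraction_lefschetz_apply (x : SForm n) (t : Finset (Fin (2 * n))) :
    contraction n (lefschetz n x) t = lefschetz n (contraction n x) t + (n - t.card) * x t := by
  have h := congrArg (fun f : Module.End ℝ (SForm n) => f x t) contraction_mul_lefschetz_sub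
  simp only [LinearMap.sub_apply, Module.End.mul_apply, LinearMap.sum_apply, Pi.sub_apply,
    Finset.sum_apply, contractPart_lefschetzPart_self_apply,
    lefschetzPart_contractPart_self_apply] at h
  rw [← sum_disjoint_sub_subset, sum_mul, ← sub_eq_iff_eq_add', h]
  simp only [sub_mul, ite_mul, one_mul, zero_mul]

variable (n) in
def formsOfDegree (m : ℕ) : Submodule ℝ (SForm n) where
  carrier := {x | IsForm m x}
  add_mem' {x y} hx hy s hs := by
    by_cases hxs : x s = 0
    · exact hy s (by simpa [hxs] using hs)
    · exact hx s hxs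
  zero_mem' _ h := absurd rfl h
  smul_mem' c x hx s hs := hx s (right_ne_zero_of_mul hs)

lemma mem_formsOfDegree {m : ℕ} {x : SForm n} : x ∈ formsOfDegree n m ↔ IsForm m x := Iff.rfl

lemma isForm_lefschetz {m : ℕ} {x : SForm n} (hx : IsForm m x) :
    IsForm (m + 2) (lefschetz n x) := by
  rw [← mem_formsOfDegree, lefschetz, LinearMap.sum_apply]
  refine Submodule.sum_mem _ fun i _ t ht => ?_
  rw [lefschetzPart_apply] at ht
  split_ifs at ht with hsub
  · have hcard := hx _ (right_ne_zero_of_mul ht)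
    rw [card_sdiff_of_subset hsub, card_pair] at hcard
    have := card_pair i ▸ card_le_card hsub
    omega
  · exact absurd rfl ht

lemma isForm_lefschetz_pow {m : ℕ} {x : SForm n} (hx : IsForm m x) (j : ℕ) :
    IsForm (m + 2 * j) ((lefschetz n ^ j) x) := by
  induction j with
  | zero => simpa using hx
  | succ j ih => rw [pow_succ', Module.End.mul_apply]; exact isForm_lefschetz ih

lemma card_add_two_of_contraction_ne_zero {m : ℕ} {y : SForm n} (hy : IsForm m y)
    {t : Finset (Fin (2 * n))} (ht : contraction n y t ≠ 0) : t.card + 2 = m := by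
  rw [contraction, LinearMap.sum_apply, Finset.sum_apply] at ht
  obtain ⟨i, -, hi⟩ := exists_ne_zero_of_sum_ne_zero ht
  rw [contractPart_apply] at hi
  split_ifs at hi with hdisj
  · rw [← hy _ (right_ne_zero_of_mul hi), card_union_of_disjoint hdisj.symm, card_pair]
  · exact absurd rfl hi

lemma isForm_contraction {m : ℕ} {y : SForm n} (hy : IsForm m y) :
    IsForm (m - 2) (contraction n y) := fun _ ht => by
  have := card_add_two_of_contraction_ne_zero hy ht
  omega

lemma contraction_eq_zero_of_lt_two {m : ℕ} {y : SForm n} (hy : IsForm m y) (hm : m < 2) :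
    contraction n y = 0 := by
  by_contra! h
  obtain ⟨t, ht⟩ := Function.ne_iff.1 h
  have := card_add_two_of_contraction_ne_zero hy ht
  omega

lemma contraction_lefschetz {m : ℕ} {x : SForm n} (hx : IsForm m x) :
    contraction n (lefschetz n x) = lefschetz n (contraction n x) + ((n : ℝ) - m) • x := by
  ext t
  rw [contraction_lefschetz_apply, Pi.add_apply, Pi.smul_apply, smul_eq_mul]
  by_cases hxt : x t = 0
  · rw [hxt, mul_zero, mul_zero]
  · rw [hx t hxt]

lemma contraction_lefschetz_pow_succ {d : ℕ} {p : SForm n} (hp : IsForm d p)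
    (hprim : contraction n p = 0) (m : ℕ) :
    contraction n ((lefschetz n ^ (m + 1)) p) =
      ((m + 1 : ℝ) * (n - d - m)) • (lefschetz n ^ m) p := by
  induction m with
  | zero => simp [contraction_lefschetz hp, hprim]
  | succ m ih =>
    rw [pow_succ' _ (m + 1), Module.End.mul_apply,
      contraction_lefschetz (isForm_lefschetz_pow hp (m + 1)), ih, map_smul,
      ← Module.End.mul_apply, ← pow_succ', ← add_smul]
    congr 1
    push_cast
    ring

lemma dotProduct_lefschetz_pow_eq_zero {a b : SForm n} {d : ℕ} (ha : contraction n a = 0)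
    (hb : IsForm d b) (hb' : contraction n b = 0) {i j : ℕ} (hij : i < j) :
    (lefschetz n ^ i) a ⬝ᵥ (lefschetz n ^ j) b = 0 := by
  obtain ⟨j, rfl⟩ := Nat.exists_eq_add_of_lt hij
  induction i generalizing j with
  | zero =>
    rw [pow_zero, Module.End.one_apply, zero_add, pow_succ', Module.End.mul_apply,
      dotProduct_comm, lefschetz_dotProduct, ha, dotProduct_zero]
  | succ i ih =>
    rw [pow_succ', Module.End.mul_apply, lefschetz_dotProduct,
      show i + 1 + j + 1 = i + j + 1 + 1 by ring, contraction_lefschetz_pow_succ hb hb',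
      dotProduct_smul, ih j (by omega), smul_zero]

lemma exists_primitive_add_lefschetz {k : ℕ} (hk : 2 ≤ k) {x : SForm n} (hx : IsForm k x) :
    ∃ p y : SForm n, IsForm k p ∧ contraction n p = 0 ∧ IsForm (k - 2) y ∧
      x = p + lefschetz n y := by
  obtain ⟨_, ⟨y, hy, rfl⟩, p, rfl, hp⟩ :=
    ((formsOfDegree n (k - 2)).map (lefschetz n)).exists_add_mem_dotProduct_eq_zero x
  have hLy : IsForm k (lefschetz n y) := Nat.sub_add_cancel hk ▸ isForm_lefschetz hy
  have hpk : IsForm k p := by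
    simpa [mem_formsOfDegree] using (formsOfDegree n k).sub_mem hx hLy
  have hprim : contraction n p = 0 := by
    have := hp _ ⟨contraction n p, isForm_contraction hpk, rfl⟩
    rwa [lefschetz_dotProduct, dotProduct_comm, dotProduct_self_eq_zero] at this
  exact ⟨p, y, hpk, hprim, hy, add_comm _ _⟩

theorem exists_primitive_decomposition (k : ℕ) {x : SForm n} (hx : IsForm k x) :
    ∃ c : ℕ → SForm n, (∀ j ≤ k / 2, contraction n (c j) = 0 ∧ IsForm (k - 2 * j) (c j)) ∧
      x = ∑ j ∈ range (k / 2 + 1), (lefschetz n ^ j) (c j) := by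
  induction k using Nat.strong_induction_on generalizing x with
  | _ k ih =>
  rcases lt_or_ge k 2 with hk | hk
  · refine ⟨fun _ => x, fun j hj => ?_, by simp [Nat.div_eq_of_lt hk]⟩
    obtain rfl : j = 0 := by omega
    exact ⟨contraction_eq_zero_of_lt_two hx hk, by simpa using hx⟩
  obtain ⟨p, y, hp, hprim, hy, rfl⟩ := exists_primitive_add_lefschetz hk hx
  obtain ⟨c, hc, rfl⟩ := ih (k - 2) (by omega) hy
  have hdiv : k / 2 = (k - 2) / 2 + 1 := by omega
  refine ⟨fun j => if j = 0 then p else c (j - 1), fun j hj => ?_, ?_⟩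
  · rcases j with _ | j
    · exact ⟨hprim, by simpa using hp⟩
    · simpa [show k - 2 * (j + 1) = k - 2 - 2 * j by omega] using hc j (by omega)
  · rw [hdiv, sum_range_succ' _ ((k - 2) / 2 + 1), map_sum, add_comm]
    simp only [Nat.add_one_ne_zero, if_false, if_true, Nat.add_sub_cancel, pow_succ',
      Module.End.mul_apply, pow_zero, Module.End.one_apply]

end PrimitiveDecomposition

open PrimitiveDecomposition

theorem primitive_decomposition_general (n : ℕ)
    (Lam : SForm n → SForm n)
    (hLam : ∀ x y : SForm n, sip (Lop n x) y = sip x (Lam y))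
    (k : ℕ) (x : SForm n) (hx : IsForm k x) :
    ∃ (s : ℕ) (c : ℕ → SForm n),
      (∀ j ≤ s, Lam (c j) = 0 ∧ IsForm (k - 2 * j) (c j) ∧ (2 * j ≤ k ∨ c j = 0)) ∧
      x = ∑ j ∈ Finset.range (s + 1), Lpow n j (c j) ∧
      (∀ i ≤ s, ∀ j ≤ s, i ≠ j → sip (Lpow n i (c i)) (Lpow n j (c j)) = 0) := by
  obtain rfl := eq_contraction_of_adjoint hLam
  obtain ⟨c, hc, hsum⟩ := exists_primitive_decomposition k hx
  refine ⟨k / 2, c, fun j hj => ⟨(hc j hj).1, (hc j hj).2, Or.inl (by omega)⟩,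
    by simpa only [Lpow_eq_lefschetz_pow] using hsum, fun i hi j hj hij => ?_⟩
  rw [Lpow_eq_lefschetz_pow, Lpow_eq_lefschetz_pow, sip_eq_dotProduct]
  rcases hij.lt_or_gt with h | h
  · exact dotProduct_lefschetz_pow_eq_zero (hc i hi).1 (hc j hj).2 (hc j hj).1 h
  · rw [dotProduct_comm]
    exact dotProduct_lefschetz_pow_eq_zero (hc j hj).1 (hc i hi).2 (hc i hi).1 h

/-- primitive decomposition: every `k`-form `x` can be written as
`x = x₀ + L x₁ + … + L^s x_s` with each `x_j` a primitive `(k−2j)`-form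
(in particular `x_j = 0` whenever `2j > k`), the terms being pairwise orthogonal. -/
theorem primitive_decomposition (n : ℕ) (hn : 1 ≤ n)
    (Lam : SForm n → SForm n)
    (hLam : ∀ x y : SForm n, sip (Lop n x) y = sip x (Lam y))
    (k : ℕ) (x : SForm n) (hx : IsForm k x) :
    ∃ (s : ℕ) (c : ℕ → SForm n),
      (∀ j ≤ s, Lam (c j) = 0 ∧ IsForm (k - 2 * j) (c j) ∧ (2 * j ≤ k ∨ c j = 0)) ∧
      x = ∑ j ∈ Finset.range (s + 1), Lpow n j (c j) ∧
      (∀ i ≤ s, ∀ j ≤ s, i ≠ j → sip (Lpow n i (c i)) (Lpow n j (c j)) = 0) :=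
  primitive_decomposition_general n Lam hLam k x hx
end
end

section
/- For every smooth super form α on ℝⁿ (with respect to the flat ℝ-Kähler metric ω = Σ dx_i∧dξ_i), * d# * (α) = (−1)^{n+1} (Λ(d#α) − d#(Λα)). -/
open scoped BigOperators

noncomputable section

/-- The super-differential `dα = Σ_i dx_i ∧ ∂α/∂x_i` of a super form
`α : ℝⁿ → ⋀(ℝ^{2n})`. -/
def dS (n : ℕ) (α : (Fin n → ℝ) → SForm n) : (Fin n → ℝ) → SForm n :=
  fun x => ∑ i : Fin n, wedge (sDx n i) (fderiv ℝ α x (Pi.single i 1))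

/-- The super-differential `d#α = Σ_i dξ_i ∧ ∂α/∂x_i` of a super form. -/
def dSh (n : ℕ) (α : (Fin n → ℝ) → SForm n) : (Fin n → ℝ) → SForm n :=
  fun x => ∑ i : Fin n, wedge (sDxi n i) (fderiv ℝ α x (Pi.single i 1))

namespace SFaux
open Finset

variable {m : ℕ}

def Nsg (a b : Finset (Fin m)) : ℕ := ((a ×ˢ b).filter fun q => q.2 < q.1).card

def esg (a b : Finset (Fin m)) : ℝ := (-1) ^ Nsg a b

lemma esg_sq (a b : Finset (Fin m)) : esg a b * esg a b = 1 := by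
  rw [esg, ← pow_add, ← two_mul, pow_mul]; norm_num

lemma esg_ne_zero (a b : Finset (Fin m)) : esg a b ≠ 0 := by
  intro h; have := esg_sq a b; rw [h] at this; simp at this

lemma neg_one_pow_eq (a b : ℕ) (h : a % 2 = b % 2) : ((-1:ℝ))^a = (-1)^b := by
  conv_lhs => rw [← Nat.div_add_mod a 2]
  conv_rhs => rw [← Nat.div_add_mod b 2]
  rw [pow_add, pow_add, pow_mul, pow_mul, h]; norm_num

lemma Nsg_union_right {b c : Finset (Fin m)} (a : Finset (Fin m)) (h : Disjoint b c) :
    Nsg a (b ∪ c) = Nsg a b + Nsg a c := by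
  unfold Nsg
  rw [Finset.product_union, Finset.filter_union, Finset.card_union_of_disjoint]
  exact Finset.disjoint_filter_filter ((Finset.disjoint_product).2 (Or.inr h))

lemma Nsg_union_left {a b : Finset (Fin m)} (c : Finset (Fin m)) (h : Disjoint a b) :
    Nsg (a ∪ b) c = Nsg a c + Nsg b c := by
  unfold Nsg
  rw [Finset.union_product, Finset.filter_union, Finset.card_union_of_disjoint]
  exact Finset.disjoint_filter_filter ((Finset.disjoint_product).2 (Or.inl h))

lemma esg_union_right {b c : Finset (Fin m)} (a : Finset (Fin m)) (h : Disjoint b c) :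
    esg a (b ∪ c) = esg a b * esg a c := by
  rw [esg, esg, esg, Nsg_union_right a h, pow_add]

lemma esg_union_left {a b : Finset (Fin m)} (c : Finset (Fin m)) (h : Disjoint a b) :
    esg (a ∪ b) c = esg a c * esg b c := by
  rw [esg, esg, esg, Nsg_union_left c h, pow_add]

lemma Nsg_comm {a b : Finset (Fin m)} (h : Disjoint a b) :
    Nsg a b + Nsg b a = a.card * b.card := by
  unfold Nsg
  have h1 : ((b ×ˢ a).filter fun q => q.2 < q.1).card
      = ((a ×ˢ b).filter fun q => q.1 < q.2).card := by
    apply Finset.card_bij (fun q _ => (q.2, q.1))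
    · rintro ⟨x, y⟩ hq; simp only [Finset.mem_filter, Finset.mem_product] at hq ⊢; tauto
    · rintro ⟨x, y⟩ h1 ⟨x2, y2⟩ h2 he
      simp only [Prod.mk.injEq] at he; simp [Prod.ext_iff, he.1, he.2]
    · rintro ⟨x, y⟩ hq; refine ⟨(y, x), ?_, rfl⟩
      simp only [Finset.mem_filter, Finset.mem_product] at hq ⊢; tauto
  rw [h1]
  have h2 : ((a ×ˢ b).filter fun q => q.1 < q.2) = (a ×ˢ b).filter fun q => ¬ q.2 < q.1 := by
    apply Finset.filter_congr
    rintro ⟨x, y⟩ hq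
    simp only [Finset.mem_product] at hq
    have hne : x ≠ y := fun he => (Finset.disjoint_left.1 h hq.1) (he ▸ hq.2)
    simp only [eq_iff_iff]
    omega
  rw [h2, Finset.card_filter_add_card_filter_not, Finset.card_product]

lemma esg_comm {a b : Finset (Fin m)} (h : Disjoint a b) :
    esg a b * esg b a = (-1) ^ (a.card * b.card) := by
  rw [esg, esg, ← pow_add, Nsg_comm h]

lemma esg_comm' {a b : Finset (Fin m)} (h : Disjoint a b) (he : Even (a.card * b.card)) :
    esg a b = esg b a := by
  have h1 := esg_comm h
  rw [he.neg_one_pow] at h1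
  have h2 := esg_sq a b
  exact mul_left_cancel₀ (esg_ne_zero a b) (h2.trans h1.symm)

lemma Nsg_empty_right (a : Finset (Fin m)) : Nsg a ∅ = 0 := by simp [Nsg]

lemma Nsg_empty_left (b : Finset (Fin m)) : Nsg ∅ b = 0 := by simp [Nsg]

lemma esg_empty_right (a : Finset (Fin m)) : esg a ∅ = 1 := by simp [esg, Nsg_empty_right]

lemma esg_empty_left (b : Finset (Fin m)) : esg ∅ b = 1 := by simp [esg, Nsg_empty_left]

lemma Nsg_singleton_left (a : Fin m) (s : Finset (Fin m)) :
    Nsg {a} s = (s.filter (· < a)).card := by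
  unfold Nsg
  apply Finset.card_bij (fun q _ => q.2)
  · rintro ⟨x, y⟩ hq; simp only [Finset.mem_filter, Finset.mem_product, Finset.mem_singleton] at hq ⊢
    obtain ⟨⟨hx, hy⟩, hlt⟩ := hq; exact ⟨hy, hx ▸ hlt⟩
  · rintro ⟨x, y⟩ h1 ⟨x2, y2⟩ h2 he
    simp only [Finset.mem_filter, Finset.mem_product, Finset.mem_singleton] at h1 h2
    simp only at he; simp [Prod.ext_iff, he, h1.1.1, h2.1.1]
  · intro y hy; simp only [Finset.mem_filter] at hy
    exact ⟨(a, y), by simp [Finset.mem_filter, Finset.mem_product, hy.1, hy.2], rfl⟩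

lemma Nsg_singleton_right (s : Finset (Fin m)) (a : Fin m) :
    Nsg s {a} = (s.filter (a < ·)).card := by
  unfold Nsg
  apply Finset.card_bij (fun q _ => q.1)
  · rintro ⟨x, y⟩ hq; simp only [Finset.mem_filter, Finset.mem_product, Finset.mem_singleton] at hq ⊢
    obtain ⟨⟨hx, hy⟩, hlt⟩ := hq; exact ⟨hx, hy ▸ hlt⟩
  · rintro ⟨x, y⟩ h1 ⟨x2, y2⟩ h2 he
    simp only [Finset.mem_filter, Finset.mem_product, Finset.mem_singleton] at h1 h2
    simp only at he; simp [Prod.ext_iff, he, h1.1.2, h2.1.2]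
  · intro y hy; simp only [Finset.mem_filter] at hy
    exact ⟨(y, a), by simp [Finset.mem_filter, Finset.mem_product, hy.1, hy.2], rfl⟩

end SFaux
namespace SFaux
open Finset

variable {n : ℕ}

def es (s : Finset (Fin (2 * n))) : SForm n := fun t => if t = s then 1 else 0

lemma es_self (s : Finset (Fin (2 * n))) : es s s = 1 := by simp [es]

lemma wedge_es_left (a : Finset (Fin (2 * n))) (z : SForm n) (s : Finset (Fin (2 * n))) :
    wedge (es a) z s = if a ⊆ s then esg a (s \ a) * z (s \ a) else 0 := by
  unfold wedge
  have : ∀ t ∈ s.powerset,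
      (-1 : ℝ) ^ (((t ×ˢ (s \ t)).filter fun q => q.2 < q.1).card) * es a t * z (s \ t)
      = if a = t then esg a (s \ a) * z (s \ a) else 0 := by
    intro t _
    by_cases h : a = t
    · subst h; simp [es, esg, Nsg, mul_comm, mul_assoc]
    · simp [es, Ne.symm h, h]
  rw [Finset.sum_congr rfl this, Finset.sum_ite_eq s.powerset a
    (fun _ => esg a (s \ a) * z (s \ a))]
  simp only [Finset.mem_powerset]

lemma wedge_es_es {a b : Finset (Fin (2 * n))} (h : Disjoint a b) :
    wedge (es a) (es b) = esg a b • es (a ∪ b) := by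
  funext s
  rw [wedge_es_left]
  by_cases hs : a ⊆ s
  · by_cases he : s = a ∪ b
    · subst he
      have : (a ∪ b) \ a = b := by
        rw [Finset.union_sdiff_left]; exact Finset.sdiff_eq_self_of_disjoint h.symm
      simp [hs, this, es, smul_eq_mul]
    · have hne : s \ a ≠ b := by
        intro hc; apply he
        rw [← hc]; rw [Finset.union_sdiff_of_subset hs]
      simp [hs, es, hne, he, smul_eq_mul]
  · have hne : s ≠ a ∪ b := fun hc => hs (hc ▸ Finset.subset_union_left)
    simp [hs, es, hne, smul_eq_mul]

lemma wedge_es_es_nd {a b : Finset (Fin (2 * n))} (h : ¬ Disjoint a b) :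
    wedge (es a) (es b) = 0 := by
  funext s
  rw [wedge_es_left]
  by_cases hs : a ⊆ s
  · have : s \ a ≠ b := by
      intro hc; exact h ((hc ▸ (Finset.sdiff_disjoint : Disjoint (s \ a) a)).symm)
    simp [hs, es, this]
  · simp [hs]

lemma wedge_smul_right (c : ℝ) (x y : SForm n) : wedge x (c • y) = c • wedge x y := by
  funext s
  simp only [wedge, Pi.smul_apply, smul_eq_mul, Finset.mul_sum]
  apply Finset.sum_congr rfl; intros; ring

lemma wedge_smul_left (c : ℝ) (x y : SForm n) : wedge (c • x) y = c • wedge x y := by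
  funext s
  simp only [wedge, Pi.smul_apply, smul_eq_mul, Finset.mul_sum]
  apply Finset.sum_congr rfl; intros; ring

lemma wedge_add_right (x y z : SForm n) : wedge x (y + z) = wedge x y + wedge x z := by
  funext s
  simp only [wedge, Pi.add_apply, ← Finset.sum_add_distrib]
  apply Finset.sum_congr rfl; intros; ring

lemma wedge_zero_right (x : SForm n) : wedge x 0 = 0 := by
  funext s; simp [wedge]

lemma wedge_zero_left (y : SForm n) : wedge 0 y = 0 := by
  funext s; simp [wedge]

lemma wedge_sum_left {ι : Type*} (S : Finset ι) (f : ι → SForm n) (y : SForm n) :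
    wedge (∑ i ∈ S, f i) y = ∑ i ∈ S, wedge (f i) y := by
  funext s
  simp only [wedge, Finset.sum_apply, Finset.sum_mul, Finset.mul_sum]
  rw [Finset.sum_comm]

lemma wedge_sum_right {ι : Type*} (S : Finset ι) (x : SForm n) (f : ι → SForm n) :
    wedge x (∑ i ∈ S, f i) = ∑ i ∈ S, wedge x (f i) := by
  funext s
  simp only [wedge, Finset.sum_apply, Finset.sum_mul, Finset.mul_sum]
  rw [Finset.sum_comm]

lemma sOne_eq : sOne n = es ∅ := rfl

lemma wedge_one_left (z : SForm n) : wedge (sOne n) z = z := by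
  funext s
  rw [sOne_eq, wedge_es_left]
  simp [esg_empty_left]

lemma sip_es_left (t : Finset (Fin (2 * n))) (z : SForm n) : sip (es t) z = z t := by
  unfold sip es
  rw [Finset.sum_eq_single t] <;> simp +contextual [eq_comm]

lemma decompose (x : SForm n) : x = ∑ s : Finset (Fin (2 * n)), x s • es s := by
  funext t
  simp only [Finset.sum_apply, Pi.smul_apply, es, smul_eq_mul]
  rw [Finset.sum_eq_single t] <;> simp +contextual [eq_comm]

end SFaux
namespace SFaux
open Finset

variable {n : ℕ}

def Pp (i : Fin n) : Finset (Fin (2 * n)) := {dxI n i, dxiI n i}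

lemma dxI_ne_dxiI (i : Fin n) : dxI n i ≠ dxiI n i := by
  intro h
  have := congrArg Fin.val h
  simp [dxI, dxiI] at this
  omega

lemma sDx_eq (i : Fin n) : sDx n i = es {dxI n i} := rfl
lemma sDxi_eq (i : Fin n) : sDxi n i = es {dxiI n i} := rfl

lemma omegaF_eq : omegaF n = ∑ i : Fin n, es (Pp i) := by
  unfold omegaF
  apply Finset.sum_congr rfl
  intro i _
  rw [sDx_eq, sDxi_eq, wedge_es_es (by simp [(dxI_ne_dxiI i), Ne.symm (dxI_ne_dxiI i)])]
  have h1 : esg {dxI n i} {dxiI n i} = 1 := by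
    rw [esg, Nsg_singleton_left]
    have : ({dxiI n i} : Finset (Fin (2*n))).filter (· < dxI n i) = ∅ := by
      apply Finset.filter_false_of_mem
      intro b hb
      simp only [Finset.mem_singleton] at hb
      subst hb
      simp only [Fin.lt_def, dxI, dxiI, not_lt]
      omega
    rw [this]; simp
  rw [h1, one_smul]
  rfl

lemma Lop_es (t : Finset (Fin (2 * n))) :
    Lop n (es t) = ∑ i : Fin n,
      if Disjoint (Pp i) t then esg (Pp i) t • es (Pp i ∪ t) else 0 := by
  unfold Lop
  rw [omegaF_eq, wedge_sum_left]
  apply Finset.sum_congr rfl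
  intro i _
  by_cases h : Disjoint (Pp i) t
  · rw [wedge_es_es h, if_pos h]
  · rw [wedge_es_es_nd h, if_neg h]

lemma sip_smul_left (c : ℝ) (x y : SForm n) : sip (c • x) y = c * sip x y := by
  unfold sip
  rw [Finset.mul_sum]
  apply Finset.sum_congr rfl; intros; simp; ring

lemma sip_zero_left (y : SForm n) : sip (0 : SForm n) y = 0 := by simp [sip]

lemma sip_sum_left {ι : Type*} (S : Finset ι) (f : ι → SForm n) (y : SForm n) :
    sip (∑ i ∈ S, f i) y = ∑ i ∈ S, sip (f i) y := by
  unfold sip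
  rw [Finset.sum_comm]
  apply Finset.sum_congr rfl; intros; simp [Finset.sum_mul]

lemma Lam_apply (Lam : SForm n →ₗ[ℝ] SForm n)
    (hLam : ∀ x y : SForm n, sip (Lop n x) y = sip x (Lam y))
    (z : SForm n) (t : Finset (Fin (2 * n))) :
    Lam z t = ∑ i : Fin n,
      if Disjoint (Pp i) t then esg (Pp i) t * z (Pp i ∪ t) else 0 := by
  have h1 : Lam z t = sip (es t) (Lam z) := (sip_es_left t (Lam z)).symm
  rw [h1, ← hLam, Lop_es, sip_sum_left]
  apply Finset.sum_congr rfl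
  intro i _
  by_cases h : Disjoint (Pp i) t
  · rw [if_pos h, if_pos h, sip_smul_left, sip_es_left]
  · rw [if_neg h, if_neg h, sip_zero_left]

def iot (r : Fin (2 * n)) (z : SForm n) : SForm n :=
  fun t => if r ∈ t then 0 else esg {r} t * z (insert r t)

lemma iot_es (r : Fin (2 * n)) (s : Finset (Fin (2 * n))) :
    iot r (es s) = if r ∈ s then esg {r} (s.erase r) • es (s.erase r) else 0 := by
  funext t
  unfold iot
  by_cases hrt : r ∈ t
  · by_cases hrs : r ∈ s
    · have : es (s.erase r) t = 0 := by
        simp only [es, ite_eq_right_iff]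
        intro he; exact absurd (he ▸ hrt) (Finset.notMem_erase r s)
      simp [hrt, hrs, this]
    · simp [hrt, hrs]
  · rw [if_neg hrt]
    by_cases hrs : r ∈ s
    · rw [if_pos hrs]
      by_cases he : t = s.erase r
      · subst he
        have : insert r (s.erase r) = s := Finset.insert_erase hrs
        simp [this, es, smul_eq_mul]
      · have : insert r t ≠ s := by
          intro hc
          apply he
          rw [← hc, Finset.erase_insert hrt]
        simp [es, this, he, smul_eq_mul]
    · have : insert r t ≠ s := by
        intro hc; exact hrs (hc ▸ Finset.mem_insert_self r t)
      simp [es, this, hrs]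

lemma iot_smul (r : Fin (2 * n)) (c : ℝ) (z : SForm n) : iot r (c • z) = c • iot r z := by
  funext t
  unfold iot
  by_cases h : r ∈ t <;> simp [h] <;> ring

lemma iot_sum {ι : Type*} (r : Fin (2 * n)) (S : Finset ι) (f : ι → SForm n) :
    iot r (∑ i ∈ S, f i) = ∑ i ∈ S, iot r (f i) := by
  funext t
  unfold iot
  by_cases h : r ∈ t <;> simp [h, Finset.mul_sum]

end SFaux
namespace SFaux
open Finset

variable {n : ℕ}

def sg (a : Fin (2 * n)) : Fin (2 * n) :=
  if h : a.1 < n then ⟨a.1 + n, by have := a.2; omega⟩ else ⟨a.1 - n, by have := a.2; omega⟩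

lemma sg_val_lt {a : Fin (2 * n)} (h : a.1 < n) : (sg a).1 = a.1 + n := by simp [sg, h]
lemma sg_val_ge {a : Fin (2 * n)} (h : ¬ a.1 < n) : (sg a).1 = a.1 - n := by simp [sg, h]

lemma sg_flip {a : Fin (2 * n)} : (sg a).1 < n ↔ ¬ a.1 < n := by
  by_cases h : a.1 < n
  · rw [sg_val_lt h]; omega
  · rw [sg_val_ge h]; have := a.2; omega

lemma sg_sg (a : Fin (2 * n)) : sg (sg a) = a := by
  apply Fin.ext
  by_cases h : a.1 < n
  · have h2 : ¬ (sg a).1 < n := by rw [sg_flip]; simp [h]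
    rw [sg_val_ge h2, sg_val_lt h]; omega
  · have h2 : (sg a).1 < n := by rw [sg_flip]; exact h
    rw [sg_val_lt h2, sg_val_ge h]; have := a.2; omega

lemma sg_inj : Function.Injective (sg (n := n)) :=
  Function.LeftInverse.injective sg_sg

def smap (s : Finset (Fin (2 * n))) : Finset (Fin (2 * n)) := s.image sg

lemma mem_smap {s : Finset (Fin (2 * n))} {b : Fin (2 * n)} : b ∈ smap s ↔ sg b ∈ s := by
  unfold smap
  simp only [Finset.mem_image]
  constructor
  · rintro ⟨a, ha, rfl⟩; rwa [sg_sg]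
  · intro h; exact ⟨sg b, h, sg_sg b⟩

lemma smap_smap (s : Finset (Fin (2 * n))) : smap (smap s) = s := by
  ext b; rw [mem_smap, mem_smap, sg_sg]

lemma card_smap (s : Finset (Fin (2 * n))) : (smap s).card = s.card :=
  Finset.card_image_of_injective s sg_inj

lemma smap_insert (a : Fin (2 * n)) (s : Finset (Fin (2 * n))) :
    smap (insert a s) = insert (sg a) (smap s) := Finset.image_insert _ _ _

lemma smap_empty : smap (∅ : Finset (Fin (2 * n))) = ∅ := rfl

lemma smap_compl (s : Finset (Fin (2 * n))) : smap sᶜ = (smap s)ᶜ := by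
  ext b
  rw [mem_smap, Finset.mem_compl, Finset.mem_compl, mem_smap]

def epsJ (s : Finset (Fin (2 * n))) : ℝ :=
  (-1) ^ ((s.filter fun b => b.1 < n).card * (s.filter fun b => ¬ b.1 < n).card)

lemma filter_smap (s : Finset (Fin (2 * n))) (p : Fin (2 * n) → Prop) [DecidablePred p] :
    (smap s).filter p = smap (s.filter fun b => p (sg b)) := by
  ext b
  simp only [Finset.mem_filter, mem_smap]
  constructor
  · rintro ⟨h1, h2⟩; exact ⟨h1, by rwa [sg_sg]⟩
  · rintro ⟨h1, h2⟩; exact ⟨h1, by rwa [sg_sg] at h2⟩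

lemma card_filter_split (s : Finset (Fin (2 * n))) (p : Fin (2 * n) → Prop) [DecidablePred p] :
    (s.filter p).card = ((s.filter fun b => b.1 < n).filter p).card
      + ((s.filter fun b => ¬ b.1 < n).filter p).card := by
  have e1 : (s.filter fun b => b.1 < n).filter p = (s.filter p).filter (fun b => b.1 < n) := by
    ext b; simp only [Finset.mem_filter]; tauto
  have e2 : (s.filter fun b => ¬ b.1 < n).filter p = (s.filter p).filter (fun b => ¬ b.1 < n) := by
    ext b; simp only [Finset.mem_filter]; tauto
  rw [e1, e2, Finset.card_filter_add_card_filter_not]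

/-- Count of elements of `smap s` below `sg a`, when `a` is in the first half. -/
lemma count_smap_lt_x {s : Finset (Fin (2 * n))} {a : Fin (2 * n)} (h : a.1 < n) :
    ((smap s).filter (· < sg a)).card
      = ((s.filter fun b => b.1 < n).filter (· < a)).card
        + (s.filter fun b => ¬ b.1 < n).card := by
  rw [filter_smap, card_smap, card_filter_split]
  have h1 : ((s.filter fun b => b.1 < n).filter fun b => sg b < sg a)
      = (s.filter fun b => b.1 < n).filter (· < a) := by
    apply Finset.filter_congr
    intro b hb
    simp only [Finset.mem_filter] at hb
    simp only [eq_iff_iff, Fin.lt_def, sg_val_lt hb.2, sg_val_lt h]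
    omega
  have h2 : ((s.filter fun b => ¬ b.1 < n).filter fun b => sg b < sg a)
      = s.filter fun b => ¬ b.1 < n := by
    apply Finset.filter_true_of_mem
    intro b hb
    simp only [Finset.mem_filter] at hb
    have hb2 := b.2
    simp only [Fin.lt_def, sg_val_ge hb.2, sg_val_lt h]
    omega
  rw [h1, h2]

/-- Count of elements of `smap s` below `sg a`, when `a` is in the second half. -/
lemma count_smap_lt_xi {s : Finset (Fin (2 * n))} {a : Fin (2 * n)} (h : ¬ a.1 < n) :
    ((smap s).filter (· < sg a)).card
      = ((s.filter fun b => ¬ b.1 < n).filter (· < a)).card := by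
  rw [filter_smap, card_smap, card_filter_split]
  have h1 : ((s.filter fun b => (b:Fin (2*n)).1 < n).filter fun b => sg b < sg a) = ∅ := by
    apply Finset.filter_false_of_mem
    intro b hb
    simp only [Finset.mem_filter] at hb
    have := a.2
    simp only [Fin.lt_def, sg_val_lt hb.2, sg_val_ge h, not_lt]
    omega
  have h2 : ((s.filter fun b => ¬ b.1 < n).filter fun b => sg b < sg a)
      = (s.filter fun b => ¬ b.1 < n).filter (· < a) := by
    apply Finset.filter_congr
    intro b hb
    simp only [Finset.mem_filter] at hb
    simp only [eq_iff_iff, Fin.lt_def, sg_val_ge hb.2, sg_val_ge h]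
    omega
  rw [h1, h2]
  simp

lemma count_lt_x {s : Finset (Fin (2 * n))} {a : Fin (2 * n)} (h : a.1 < n) :
    (s.filter (· < a)).card = ((s.filter fun b => b.1 < n).filter (· < a)).card := by
  rw [card_filter_split]
  have h1 : ((s.filter fun b => ¬ (b:Fin (2*n)).1 < n).filter (· < a)) = ∅ := by
    apply Finset.filter_false_of_mem
    intro b hb
    simp only [Finset.mem_filter] at hb
    simp only [Fin.lt_def, not_lt]
    omega
  rw [h1]; simp

lemma count_lt_xi {s : Finset (Fin (2 * n))} {a : Fin (2 * n)} (h : ¬ a.1 < n) :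
    (s.filter (· < a)).card = (s.filter fun b => b.1 < n).card
      + ((s.filter fun b => ¬ b.1 < n).filter (· < a)).card := by
  rw [card_filter_split]
  have h1 : ((s.filter fun b => b.1 < n).filter (· < a)) = s.filter fun b => b.1 < n := by
    apply Finset.filter_true_of_mem
    intro b hb
    simp only [Finset.mem_filter] at hb
    simp only [Fin.lt_def]
    omega
  rw [h1]

lemma parity_helper1 (r p q : ℕ) : ((-1:ℝ))^(r + (r + q) + p * q) = (-1)^((p + 1) * q) := by
  apply neg_one_pow_eq
  have h : (p + 1) * q = p * q + q := by ring
  rw [h]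
  generalize p * q = t
  omega

lemma parity_helper2 (t p q : ℕ) : ((-1:ℝ))^(p + t + t + p * q) = (-1)^(p * (q + 1)) := by
  apply neg_one_pow_eq
  have h : p * (q + 1) = p * q + p := by ring
  rw [h]
  generalize p * q = u
  omega

lemma epsJ_step {s : Finset (Fin (2 * n))} {a : Fin (2 * n)} (ha : a ∉ s) :
    esg {a} s * esg {sg a} (smap s) * epsJ s = epsJ (insert a s) := by
  unfold esg epsJ
  rw [Nsg_singleton_left, Nsg_singleton_left, ← pow_add, ← pow_add]
  by_cases h : a.1 < n
  · rw [count_smap_lt_x h, count_lt_x h]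
    have h1 : (insert a s).filter (fun b => (b:Fin (2*n)).1 < n) = insert a (s.filter fun b => b.1 < n) := by
      rw [Finset.filter_insert, if_pos h]
    have h2 : (insert a s).filter (fun b => ¬ (b:Fin (2*n)).1 < n) = s.filter fun b => ¬ b.1 < n := by
      rw [Finset.filter_insert, if_neg (by simpa using h)]
    rw [h1, h2, Finset.card_insert_of_notMem (fun hc => ha (Finset.mem_filter.1 hc).1)]
    exact parity_helper1 _ _ _
  · rw [count_smap_lt_xi h, count_lt_xi h]
    have h1 : (insert a s).filter (fun b => (b:Fin (2*n)).1 < n) = s.filter fun b => b.1 < n := by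
      rw [Finset.filter_insert, if_neg h]
    have h2 : (insert a s).filter (fun b => ¬ (b:Fin (2*n)).1 < n) = insert a (s.filter fun b => ¬ b.1 < n) := by
      rw [Finset.filter_insert, if_pos h]
    rw [h1, h2, Finset.card_insert_of_notMem (fun hc => ha (Finset.mem_filter.1 hc).1)]
    exact parity_helper2 _ _ _

lemma Jop_es_singleton (Jop : SForm n →ₗ[ℝ] SForm n)
    (hJdx : ∀ i, Jop (sDx n i) = sDxi n i)
    (hJdxi : ∀ i, Jop (sDxi n i) = sDx n i)
    (a : Fin (2 * n)) : Jop (es {a}) = es {sg a} := by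
  by_cases h : a.1 < n
  · have h1 : a = dxI n ⟨a.1, h⟩ := by apply Fin.ext; rfl
    have h2 : sg a = dxiI n ⟨a.1, h⟩ := by apply Fin.ext; rw [sg_val_lt h]; simp [dxiI]; omega
    rw [h1]
    rw [← sDx_eq, hJdx, sDxi_eq, ← h1, h2]
  · have hb := a.2
    have h1 : a = dxiI n ⟨a.1 - n, by omega⟩ := by apply Fin.ext; simp [dxiI]; omega
    have h2 : sg a = dxI n ⟨a.1 - n, by omega⟩ := by
      apply Fin.ext; rw [sg_val_ge h]; rfl
    rw [h1, ← sDxi_eq, hJdxi, sDx_eq, ← h1, h2]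

lemma Jop_es (Jop : SForm n →ₗ[ℝ] SForm n)
    (hJone : Jop (sOne n) = sOne n)
    (hJmul : ∀ x y : SForm n, Jop (wedge x y) = wedge (Jop x) (Jop y))
    (hJdx : ∀ i, Jop (sDx n i) = sDxi n i)
    (hJdxi : ∀ i, Jop (sDxi n i) = sDx n i)
    (s : Finset (Fin (2 * n))) : Jop (es s) = epsJ s • es (smap s) := by
  induction s using Finset.induction_on with
  | empty =>
    rw [← sOne_eq, hJone, sOne_eq, smap_empty]
    simp [epsJ]
  | @insert a s ha ih =>
    have hd : Disjoint {a} s := by simpa using ha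
    have hes : es (insert a s) = esg {a} s • wedge (es {a}) (es s) := by
      rw [wedge_es_es hd, smul_smul, esg_sq, one_smul, ← Finset.insert_eq]
    rw [hes, map_smul, hJmul, Jop_es_singleton Jop hJdx hJdxi, ih, wedge_smul_right,
      wedge_es_es (by simp [mem_smap, sg_sg, ha]), smap_insert]
    rw [smul_smul, smul_smul, ← Finset.insert_eq, ← epsJ_step ha]
    congr 1
    ring
end SFaux
namespace SFaux
open Finset

variable {n : ℕ}

lemma IsForm_es (s : Finset (Fin (2 * n))) : IsForm s.card (es s) := by
  intro t ht
  by_cases h : t = s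
  · rw [h]
  · exact absurd (by simp [es, h]) ht

lemma IsForm_sOne : IsForm 0 (sOne n) := by
  intro t ht
  by_cases h : t = ∅
  · simp [h]
  · exact absurd (by simp [sOne, h]) ht

lemma card_compl' (s : Finset (Fin (2 * n))) : sᶜ.card = 2 * n - s.card := by
  rw [Finset.card_compl]; simp

lemma card_le_2n (s : Finset (Fin (2 * n))) : s.card ≤ 2 * n := by
  have := Finset.card_le_univ s
  simpa using this

lemma univ_sdiff_compl (u : Finset (Fin (2 * n))) : univ \ uᶜ = u := by
  rw [← Finset.compl_eq_univ_sdiff, compl_compl]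

lemma hodge_one (Jop : SForm n →ₗ[ℝ] SForm n) (hJone : Jop (sOne n) = sOne n)
    (hodge : SForm n →ₗ[ℝ] SForm n)
    (hodgeChar : ∀ (k : ℕ) (x y : SForm n), IsForm k x → IsForm k y →
        wedge x (hodge y) = sip x (Jop y) • omegaTop n) :
    hodge (sOne n) = omegaTop n := by
  have h := hodgeChar 0 (sOne n) (sOne n) IsForm_sOne IsForm_sOne
  rw [wedge_one_left, hJone, sOne_eq, sip_es_left, es_self, one_smul] at h
  exact h

lemma omegaTop_supp (Jop : SForm n →ₗ[ℝ] SForm n) (hJone : Jop (sOne n) = sOne n)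
    (hodge : SForm n →ₗ[ℝ] SForm n)
    (hodgeDeg : ∀ (k : ℕ) (x : SForm n), IsForm k x → IsForm (2 * n - k) (hodge x))
    (hodgeChar : ∀ (k : ℕ) (x y : SForm n), IsForm k x → IsForm k y →
        wedge x (hodge y) = sip x (Jop y) • omegaTop n) :
    omegaTop n = (omegaTop n univ) • es univ := by
  have hdeg : IsForm (2 * n - 0) (hodge (sOne n)) := hodgeDeg 0 (sOne n) IsForm_sOne
  rw [hodge_one Jop hJone hodge hodgeChar] at hdeg
  funext t
  by_cases h : t = univ
  · subst h; simp [es]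
  · have h0 : omegaTop n t = 0 := by
      by_contra hc
      have := hdeg t hc
      apply h
      apply Finset.eq_univ_of_card
      simp [this]
    simp [es, h, h0]

lemma hodge_es (Jop : SForm n →ₗ[ℝ] SForm n)
    (hJone : Jop (sOne n) = sOne n)
    (hJmul : ∀ x y : SForm n, Jop (wedge x y) = wedge (Jop x) (Jop y))
    (hJdx : ∀ i, Jop (sDx n i) = sDxi n i)
    (hJdxi : ∀ i, Jop (sDxi n i) = sDx n i)
    (hodge : SForm n →ₗ[ℝ] SForm n)
    (hodgeDeg : ∀ (k : ℕ) (x : SForm n), IsForm k x → IsForm (2 * n - k) (hodge x))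
    (hodgeChar : ∀ (k : ℕ) (x y : SForm n), IsForm k x → IsForm k y →
        wedge x (hodge y) = sip x (Jop y) • omegaTop n)
    (s : Finset (Fin (2 * n))) :
    hodge (es s)
      = (esg (smap s) (smap s)ᶜ * omegaTop n univ * epsJ s) • es (smap s)ᶜ := by
  funext u
  by_cases hu : u.card = 2 * n - s.card
  · have hsle := card_le_2n s
    have hule := card_le_2n u
    have ht : uᶜ.card = s.card := by rw [card_compl']; omega
    have hIx : IsForm s.card (es uᶜ) := ht ▸ IsForm_es uᶜ
    have hchar := hodgeChar s.card (es uᶜ) (es s) hIx (IsForm_es s)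
    have hc := congrFun hchar univ
    rw [wedge_es_left, if_pos (Finset.subset_univ _), univ_sdiff_compl,
      Jop_es Jop hJone hJmul hJdx hJdxi, sip_es_left] at hc
    have hmain : hodge (es s) u
        = esg uᶜ u * epsJ s * omegaTop n univ * (if uᶜ = smap s then 1 else 0) := by
      have h2 : esg uᶜ u * (esg uᶜ u * hodge (es s) u)
          = esg uᶜ u * ((epsJ s • es (smap s)) uᶜ • omegaTop n) univ := by rw [hc]
      rw [← mul_assoc, esg_sq, one_mul] at h2
      rw [h2]
      simp only [Pi.smul_apply, smul_eq_mul, es]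
      ring
    rw [hmain]
    by_cases he : u = (smap s)ᶜ
    · have he2 : uᶜ = smap s := by rw [he, compl_compl]
      rw [if_pos he2]
      have he3 : es (smap s)ᶜ u = 1 := by rw [he, es_self]
      rw [Pi.smul_apply, he3, ← he2]
      rw [he2, he] at *
      simp only [smul_eq_mul, mul_one]
      ring
    · have he2 : uᶜ ≠ smap s := by
        intro hcc
        exact he (by rw [← hcc, compl_compl])
      rw [if_neg he2]
      have he3 : es (smap s)ᶜ u = 0 := by simp [es, he]
      rw [Pi.smul_apply, he3]
      simp
  · have hd := hodgeDeg s.card (es s) (IsForm_es s)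
    have h0 : hodge (es s) u = 0 := by
      by_contra hc
      exact hu (hd u hc)
    have h1 : es (smap s)ᶜ u = 0 := by
      have : u ≠ (smap s)ᶜ := by
        intro he
        apply hu
        rw [he, card_compl', card_smap]
      simp [es, this]
    rw [h0, Pi.smul_apply, h1]
    simp

end SFaux
namespace SFaux
open Finset

variable {n : ℕ}

def BU (T : Finset (Fin n)) : Finset (Fin (2 * n)) := T.biUnion Pp

lemma mem_Pp {b : Fin (2 * n)} {i : Fin n} : b ∈ Pp i ↔ b = dxI n i ∨ b = dxiI n i := by
  simp [Pp]

lemma Pp_card (i : Fin n) : (Pp i).card = 2 := by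
  rw [Pp, Finset.card_insert_of_notMem (by simp [dxI_ne_dxiI i]), Finset.card_singleton]

lemma Pp_disj {i j : Fin n} (h : i ≠ j) : Disjoint (Pp i) (Pp j) := by
  rw [Finset.disjoint_left]
  intro b hb hb2
  rw [mem_Pp] at hb hb2
  apply h
  apply Fin.ext
  have hi := i.2; have hj := j.2
  rcases hb with h1 | h1 <;> rcases hb2 with h2 | h2 <;>
    (have := congrArg Fin.val (h1.symm.trans h2); simp [dxI, dxiI] at this; omega)

lemma dxI_mem_BU {i : Fin n} {T : Finset (Fin n)} : dxI n i ∈ BU T ↔ i ∈ T := by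
  unfold BU
  simp only [Finset.mem_biUnion]
  constructor
  · rintro ⟨j, hj, hmem⟩
    rw [mem_Pp] at hmem
    have hi := i.2; have hj2 := j.2
    rcases hmem with h1 | h1 <;>
      (have := congrArg Fin.val h1; simp [dxI, dxiI] at this)
    · have : i = j := Fin.ext (by omega)
      rwa [this]
    · omega
  · intro h; exact ⟨i, h, by rw [mem_Pp]; left; rfl⟩

lemma Pp_subset_BU {i : Fin n} {T : Finset (Fin n)} : Pp i ⊆ BU T ↔ i ∈ T := by
  constructor
  · intro h
    rw [← dxI_mem_BU (i := i)]
    exact h (by rw [mem_Pp]; left; rfl)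
  · intro h
    exact Finset.subset_biUnion_of_mem Pp h

lemma disj_Pp_BU {i : Fin n} {T : Finset (Fin n)} (h : i ∉ T) : Disjoint (Pp i) (BU T) := by
  unfold BU
  rw [Finset.disjoint_biUnion_right]
  intro j hj
  exact Pp_disj (fun he => h (he ▸ hj))

lemma disj_BU_BU {A B : Finset (Fin n)} (h : Disjoint A B) : Disjoint (BU A) (BU B) := by
  unfold BU
  rw [Finset.disjoint_biUnion_left]
  intro i hi
  rw [Finset.disjoint_biUnion_right]
  intro j hj
  exact Pp_disj (fun he => (Finset.disjoint_left.1 h hi) (he ▸ hj))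

lemma BU_insert (j : Fin n) (T : Finset (Fin n)) : BU (insert j T) = Pp j ∪ BU T :=
  Finset.biUnion_insert

lemma BU_union (A B : Finset (Fin n)) : BU (A ∪ B) = BU A ∪ BU B := by
  ext b
  unfold BU
  simp only [Finset.mem_biUnion, Finset.mem_union]
  constructor
  · rintro ⟨i, hi | hi, hb⟩
    · exact Or.inl ⟨i, hi, hb⟩
    · exact Or.inr ⟨i, hi, hb⟩
  · rintro (⟨i, hi, hb⟩ | ⟨i, hi, hb⟩)
    · exact ⟨i, Or.inl hi, hb⟩
    · exact ⟨i, Or.inr hi, hb⟩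

lemma BU_empty : BU (∅ : Finset (Fin n)) = ∅ := rfl

def epsT (T : Finset (Fin n)) : ℝ := ∏ j ∈ T, esg (Pp j) (BU (T.filter (· < j)))

lemma epsT_sq (T : Finset (Fin n)) : epsT T * epsT T = 1 := by
  unfold epsT
  rw [← Finset.prod_mul_distrib]
  rw [Finset.prod_congr rfl (fun j _ => esg_sq (Pp j) (BU (T.filter (· < j))))]
  exact Finset.prod_const_one

lemma esg_BU_right (a : Finset (Fin (2 * n))) (S : Finset (Fin n)) :
    esg a (BU S) = ∏ j ∈ S, esg a (Pp j) := by
  induction S using Finset.induction_on with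
  | empty => rw [BU_empty, esg_empty_right, Finset.prod_empty]
  | @insert j S hj ih =>
    rw [BU_insert, esg_union_right a (disj_Pp_BU hj), ih, Finset.prod_insert hj]

lemma esg_Pp_comm {i j : Fin n} (h : i ≠ j) : esg (Pp i) (Pp j) = esg (Pp j) (Pp i) := by
  apply esg_comm' (Pp_disj h)
  rw [Pp_card, Pp_card]
  decide

lemma epsT_insert {j : Fin n} {T : Finset (Fin n)} (hj : j ∉ T) :
    epsT (insert j T) = esg (Pp j) (BU T) * epsT T := by
  unfold epsT
  rw [Finset.prod_insert hj]
  have hjj : (insert j T).filter (· < j) = T.filter (· < j) := by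
    rw [Finset.filter_insert, if_neg (lt_irrefl j)]
  rw [hjj]
  have hstep : ∀ k ∈ T, esg (Pp k) (BU ((insert j T).filter (· < k)))
      = (if j < k then esg (Pp k) (Pp j) else 1) * esg (Pp k) (BU (T.filter (· < k))) := by
    intro k hk
    rw [Finset.filter_insert]
    by_cases h : j < k
    · rw [if_pos h, if_pos h, BU_insert, esg_union_right _ (disj_Pp_BU (fun hc => hj (Finset.mem_filter.1 hc).1))]
    · rw [if_neg h, if_neg h, one_mul]
  rw [Finset.prod_congr rfl hstep, Finset.prod_mul_distrib, ← Finset.prod_filter]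
  have hsplit : T.filter (· < j) ∪ T.filter (j < ·) = T := by
    ext k
    simp only [Finset.mem_union, Finset.mem_filter]
    constructor
    · rintro (⟨h1, _⟩ | ⟨h1, _⟩) <;> exact h1
    · intro hk
      have hne : k ≠ j := fun he => hj (he ▸ hk)
      rcases lt_or_gt_of_ne hne with h | h
      · exact Or.inl ⟨hk, h⟩
      · exact Or.inr ⟨hk, h⟩
  have hdisjf : Disjoint (T.filter (· < j)) (T.filter (j < ·)) := by
    rw [Finset.disjoint_left]
    intro k h1 h2
    rw [Finset.mem_filter] at h1 h2
    exact absurd (h1.2.trans h2.2) (lt_irrefl k)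
  have key : esg (Pp j) (BU T)
      = esg (Pp j) (BU (T.filter (· < j))) * ∏ k ∈ T.filter (j < ·), esg (Pp k) (Pp j) := by
    conv_lhs => rw [← hsplit]
    rw [BU_union, esg_union_right _ (disj_BU_BU hdisjf),
      esg_BU_right (Pp j) (T.filter (j < ·))]
    congr 1
    apply Finset.prod_congr rfl
    intro k hk
    rw [Finset.mem_filter] at hk
    exact esg_Pp_comm (fun he => (lt_irrefl j) (he ▸ hk.2))
  rw [key]
  ring

lemma Lop_apply (z : SForm n) (s : Finset (Fin (2 * n))) :
    Lop n z s = ∑ i : Fin n, if Pp i ⊆ s then esg (Pp i) (s \ Pp i) * z (s \ Pp i) else 0 := by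
  unfold Lop
  rw [omegaF_eq, wedge_sum_left, Finset.sum_apply]
  apply Finset.sum_congr rfl
  intro i _
  rw [wedge_es_left]

lemma omegaPow_BU : ∀ (m : ℕ) (T : Finset (Fin n)), T.card = m →
    omegaPow n m (BU T) = m.factorial * epsT T := by
  intro m
  induction m with
  | zero =>
    intro T hT
    rw [Finset.card_eq_zero.1 hT]
    simp [omegaPow, Lpow, BU_empty, sOne, epsT]
  | succ m ih =>
    intro T hT
    have hstep : omegaPow n (m + 1) = Lop n (omegaPow n m) := by
      unfold omegaPow Lpow
      rw [Function.iterate_succ_apply']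
    rw [hstep, Lop_apply]
    have hterm : ∀ i : Fin n, (if Pp i ⊆ BU T then esg (Pp i) (BU T \ Pp i) * omegaPow n m (BU T \ Pp i) else 0)
        = if i ∈ T then (m.factorial : ℝ) * epsT T else 0 := by
      intro i
      by_cases hi : i ∈ T
      · rw [if_pos (Pp_subset_BU.2 hi), if_pos hi]
        have hT2 : BU T \ Pp i = BU (T.erase i) := by
          have h1 : BU T = Pp i ∪ BU (T.erase i) := by
            rw [← BU_insert, Finset.insert_erase hi]
          rw [h1, Finset.union_sdiff_left,
            Finset.sdiff_eq_self_of_disjoint (disj_Pp_BU (Finset.notMem_erase i T)).symm]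
        have hcard : (T.erase i).card = m := by
          rw [Finset.card_erase_of_mem hi, hT]; rfl
        rw [hT2, ih (T.erase i) hcard]
        have hins : epsT T = esg (Pp i) (BU (T.erase i)) * epsT (T.erase i) := by
          conv_lhs => rw [← Finset.insert_erase hi]
          exact epsT_insert (Finset.notMem_erase i T)
        rw [hins]
        ring
      · rw [if_neg (fun hc => hi (Pp_subset_BU.1 hc)), if_neg hi]
    rw [Finset.sum_congr rfl (fun i _ => hterm i)]
    rw [Finset.sum_ite_mem, Finset.univ_inter, Finset.sum_const, hT]
    rw [nsmul_eq_mul, Nat.factorial_succ]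
    push_cast
    ring

lemma BU_univ : BU (univ : Finset (Fin n)) = univ := by
  apply Finset.eq_univ_of_forall
  intro b
  unfold BU
  rw [Finset.mem_biUnion]
  by_cases h : b.1 < n
  · exact ⟨⟨b.1, h⟩, Finset.mem_univ _, by rw [mem_Pp]; left; apply Fin.ext; rfl⟩
  · have hb := b.2
    exact ⟨⟨b.1 - n, by omega⟩, Finset.mem_univ _,
      by rw [mem_Pp]; right; apply Fin.ext; simp [dxiI]; omega⟩

lemma kappa_sq : (omegaTop n univ) * (omegaTop n univ) = 1 := by
  have h1 : omegaTop n univ = epsT (univ : Finset (Fin n)) := by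
    unfold omegaTop
    rw [Pi.smul_apply, smul_eq_mul]
    have h2 : omegaPow n n univ = (n.factorial : ℝ) * epsT (univ : Finset (Fin n)) := by
      rw [← BU_univ]
      exact omegaPow_BU n univ (by simp)
    rw [h2, ← mul_assoc, inv_mul_cancel₀ (by exact_mod_cast Nat.factorial_ne_zero n), one_mul]
  rw [h1]
  exact epsT_sq univ

end SFaux
namespace SFaux
open Finset

variable {n : ℕ}

lemma neg_one_pow_congr {x y : ℕ} (h : (x : ZMod 2) = (y : ZMod 2)) :
    ((-1:ℝ))^x = (-1)^y := by
  apply neg_one_pow_eq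
  exact (ZMod.natCast_eq_natCast_iff x y 2).1 h

lemma two_zmod : (2 : ZMod 2) = 0 := rfl

lemma zmod_sq (x : ZMod 2) : x * x = x := by revert x; decide

lemma card_univ_filter_lt {M : ℕ} (p : Fin M) :
    ((univ : Finset (Fin M)).filter (· < p)).card = p.1 := by
  have h1 : ((univ : Finset (Fin M)).filter (· < p)).image Fin.val = Finset.range p.1 := by
    ext j
    simp only [Finset.mem_image, Finset.mem_filter, Finset.mem_univ, true_and,
      Finset.mem_range, Fin.lt_def]
    constructor
    · rintro ⟨b, hb, rfl⟩; exact hb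
    · intro hj; exact ⟨⟨j, lt_trans hj p.2⟩, hj, rfl⟩
  rw [← Finset.card_range p.1, ← h1, Finset.card_image_of_injective _ Fin.val_injective]

lemma filter_compl_card (s : Finset (Fin (2 * n))) (P : Fin (2 * n) → Prop) [DecidablePred P] :
    (s.filter P).card + (sᶜ.filter P).card = ((univ : Finset (Fin (2*n))).filter P).card := by
  rw [← Finset.card_union_of_disjoint (Finset.disjoint_filter_filter disjoint_compl_right)]
  congr 1
  ext b
  simp only [Finset.mem_union, Finset.mem_filter, Finset.mem_compl, Finset.mem_univ, true_and]
  by_cases h : b ∈ s <;> simp [h]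

lemma cardX : (((univ : Finset (Fin (2 * n)))).filter (fun b => b.1 < n)).card = n := by
  have h1 : smap (((univ : Finset (Fin (2 * n)))).filter (fun b => b.1 < n))
      = ((univ : Finset (Fin (2 * n)))).filter (fun b => ¬ b.1 < n) := by
    ext b
    rw [mem_smap]
    simp only [Finset.mem_filter, Finset.mem_univ, true_and]
    exact sg_flip
  have h2 := card_smap (((univ : Finset (Fin (2 * n)))).filter (fun b => b.1 < n))
  rw [h1] at h2
  have h3 := Finset.card_filter_add_card_filter_not
    (s := (univ : Finset (Fin (2 * n)))) (p := fun b => b.1 < n)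
  simp only [Finset.card_univ, Fintype.card_fin] at h3
  omega

/-- Moving one element across the complement boundary. -/
lemma esg_insert_compl {B : Finset (Fin (2 * n))} {p : Fin (2 * n)} (hp : p ∉ B) :
    esg (insert p B) (insert p B)ᶜ = (-1)^(p.1 + B.card) * esg B Bᶜ := by
  have hC : (insert p B)ᶜ = Bᶜ.erase p := by
    ext b
    simp only [Finset.mem_compl, Finset.mem_insert, Finset.mem_erase]
    tauto
  have hpB : p ∈ Bᶜ := Finset.mem_compl.2 hp
  have hdpe : Disjoint ({p} : Finset (Fin (2*n))) (Bᶜ.erase p) := by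
    simp [Finset.disjoint_left]
  have hdpB : Disjoint ({p} : Finset (Fin (2*n))) B := by
    simp [Finset.disjoint_left, hp]
  have hA : Nsg (insert p B) (insert p B)ᶜ
      = (Bᶜ.filter (· < p)).card + Nsg B (Bᶜ.erase p) := by
    rw [hC, Finset.insert_eq, Nsg_union_left _ hdpB, Nsg_singleton_left]
    congr 2
    ext b
    simp only [Finset.mem_filter, Finset.mem_erase]
    constructor
    · rintro ⟨⟨_, h1⟩, h2⟩; exact ⟨h1, h2⟩
    · rintro ⟨h1, h2⟩; exact ⟨⟨fun he => absurd (he ▸ h2) (lt_irrefl p), h1⟩, h2⟩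
  have hB : Nsg B Bᶜ = (B.filter (p < ·)).card + Nsg B (Bᶜ.erase p) := by
    conv_lhs => rw [show Bᶜ = insert p (Bᶜ.erase p) from (Finset.insert_erase hpB).symm]
    rw [Finset.insert_eq, Nsg_union_right B hdpe, Nsg_singleton_right]
  have hB2 : (B.filter (p < ·)).card + (B.filter (· < p)).card = B.card := by
    have hcongr : B.filter (p < ·) = B.filter (fun b => ¬ b < p) := by
      apply Finset.filter_congr
      intro b hb
      have hbp : b ≠ p := fun he => hp (he ▸ hb)
      have : b.1 ≠ p.1 := fun hv => hbp (Fin.ext hv)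
      simp only [eq_iff_iff, Fin.lt_def]
      omega
    rw [hcongr, add_comm]
    exact Finset.card_filter_add_card_filter_not _
  have h3 : (B.filter (· < p)).card + (Bᶜ.filter (· < p)).card = p.1 := by
    rw [filter_compl_card, card_univ_filter_lt]
  rw [esg, esg, ← pow_add]
  apply neg_one_pow_eq
  omega

lemma esg_smap_compl (s : Finset (Fin (2 * n))) :
    esg (smap s) (smap s)ᶜ = (-1)^(n * s.card) * esg s sᶜ := by
  induction s using Finset.induction_on with
  | empty =>
    rw [smap_empty]
    simp
  | @insert a s ha ih =>
    have hsga : sg a ∉ smap s := by rw [mem_smap, sg_sg]; exact ha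
    rw [smap_insert, esg_insert_compl hsga, esg_insert_compl ha, ih, card_smap,
      Finset.card_insert_of_notMem ha]
    have hsg2 : ((sg a).1 : ZMod 2) = (a.1 : ZMod 2) + (n : ZMod 2) := by
      by_cases h : a.1 < n
      · rw [sg_val_lt h]; push_cast; ring
      · rw [sg_val_ge h]
        have e := congrArg (Nat.cast : ℕ → ZMod 2)
          (show a.1 - n + (n + n) = a.1 + n by omega)
        push_cast at e
        linear_combination e + (-(n : ZMod 2)) * two_zmod
    have hpow : ((-1:ℝ))^((sg a).1 + s.card) * (-1)^(n * s.card)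
        = (-1)^(n * (s.card + 1)) * (-1)^(a.1 + s.card) := by
      rw [← pow_add, ← pow_add]
      apply neg_one_pow_congr
      push_cast
      linear_combination hsg2
    calc ((-1:ℝ))^((sg a).1 + s.card) * ((-1)^(n * s.card) * esg s sᶜ)
        = (((-1:ℝ))^((sg a).1 + s.card) * (-1)^(n * s.card)) * esg s sᶜ := by ring
      _ = ((-1:ℝ)^(n * (s.card + 1)) * (-1)^(a.1 + s.card)) * esg s sᶜ := by rw [hpow]
      _ = (-1:ℝ)^(n * (s.card + 1)) * ((-1)^(a.1 + s.card) * esg s sᶜ) := by ring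

lemma esg_flip {a b : Finset (Fin (2 * n))} (h : Disjoint a b) :
    esg b a = (-1)^(a.card * b.card) * esg a b := by
  have h1 := esg_comm h
  have h2 := esg_sq a b
  calc esg b a = esg a b * esg b a * esg a b := by
        rw [mul_comm (esg a b) (esg b a), mul_assoc, h2, mul_one]
    _ = (-1)^(a.card * b.card) * esg a b := by rw [h1]

lemma parity_main (N p q r ρ : ℕ) (hp : p ≤ N) (hq : q ≤ N) (hρ : ρ ≤ r) :
    ((-1:ℝ))^(N*(p+q) + (r + (2*N - (p+q))) + (p+q)*(2*N - (p+q)) + p*q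
        + ((N-q)*((N-p)+1)) + ((N-q) + (r-ρ)))
      = (-1)^(N + ρ) := by
  obtain ⟨a, rfl⟩ : ∃ a, N = p + a := ⟨N-p, by omega⟩
  obtain ⟨b, hb⟩ : ∃ b, p + a = q + b := ⟨p+a-q, by omega⟩
  obtain ⟨d, rfl⟩ : ∃ d, r = ρ + d := ⟨r-ρ, by omega⟩
  have e1 : 2*(p+a) - (p+q) = a + b := by omega
  have e2 : (p+a) - q = b := by omega
  have e3 : (p+a) - p = a := by omega
  have e4 : (ρ+d) - ρ = d := by omega
  rw [e1, e2, e3, e4]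
  apply neg_one_pow_congr
  push_cast
  have h2 : ((p:ZMod 2) + a) = (q : ZMod 2) + b := by
    have h3 := congrArg (Nat.cast : ℕ → ZMod 2) hb
    push_cast at h3
    exact h3
  linear_combination zmod_sq (p : ZMod 2) + zmod_sq (b : ZMod 2) + (b : ZMod 2) * h2
    + ((p:ZMod 2)*(q:ZMod 2) + (a:ZMod 2)*(p:ZMod 2) + (a:ZMod 2)*(q:ZMod 2)
       + (b:ZMod 2)*(q:ZMod 2) + (d:ZMod 2) + 2*(b:ZMod 2)) * two_zmod

end SFaux
namespace SFaux
open Finset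

variable {n : ℕ}

lemma neg_pow_merge (a b c d e f : ℕ) :
    ((-1:ℝ))^a * (-1)^b * (-1)^c * (-1)^d * (-1)^e * (-1)^f = (-1)^(a+b+c+d+e+f) := by
  rw [pow_add, pow_add, pow_add, pow_add, pow_add]

lemma dxI_val (i : Fin n) : (dxI n i).1 = i.1 := rfl
lemma dxiI_val (i : Fin n) : (dxiI n i).1 = n + i.1 := rfl

lemma dxI_lt (i : Fin n) : (dxI n i).1 < n := i.2
lemma dxiI_ge (i : Fin n) : ¬ (dxiI n i).1 < n := by rw [dxiI_val]; omega

lemma sg_dxiI (i : Fin n) : sg (dxiI n i) = dxI n i := by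
  apply Fin.ext
  rw [sg_val_ge (dxiI_ge i), dxiI_val, dxI_val]
  omega

lemma sg_dxI (i : Fin n) : sg (dxI n i) = dxiI n i := by
  rw [← sg_dxiI i, sg_sg]

lemma smap_union (a b : Finset (Fin (2 * n))) : smap (a ∪ b) = smap a ∪ smap b :=
  Finset.image_union _ _

lemma smap_singleton (c : Fin (2 * n)) : smap {c} = {sg c} := Finset.image_singleton _ _

lemma smap_compl_smap (s : Finset (Fin (2 * n))) : smap ((smap s)ᶜ) = sᶜ := by
  have h := smap_compl (smap s)
  rw [smap_smap] at h
  exact h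

lemma insert_compl_eq_erase {s : Finset (Fin (2 * n))} {r : Fin (2 * n)} :
    (insert r sᶜ)ᶜ = s.erase r := by
  ext b
  simp only [Finset.mem_compl, Finset.mem_insert, Finset.mem_erase]
  tauto

lemma p_le (s : Finset (Fin (2 * n))) : (s.filter fun b => b.1 < n).card ≤ n := by
  have h := Finset.card_le_card (Finset.filter_subset_filter (fun b : Fin (2*n) => b.1 < n)
    (Finset.subset_univ s))
  rw [cardX] at h
  exact h

lemma q_le (s : Finset (Fin (2 * n))) : (s.filter fun b => ¬ b.1 < n).card ≤ n := by
  have h3 := Finset.card_filter_add_card_filter_not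
    (s := (univ : Finset (Fin (2 * n)))) (p := fun b => b.1 < n)
  simp only [Finset.card_univ, Fintype.card_fin] at h3
  have h4 := cardX (n := n)
  have := Finset.card_le_card (Finset.filter_subset_filter (fun b => ¬ b.1 < n)
    (Finset.subset_univ s))
  omega

lemma filter_smap_X (s : Finset (Fin (2 * n))) :
    ((smap s).filter fun b => b.1 < n) = smap (s.filter fun b => ¬ b.1 < n) := by
  rw [filter_smap]
  congr 1
  apply Finset.filter_congr
  intro b _
  simp only [sg_flip]

lemma filter_smap_Xi (s : Finset (Fin (2 * n))) :
    ((smap s).filter fun b => ¬ b.1 < n) = smap (s.filter fun b => b.1 < n) := by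
  rw [filter_smap]
  congr 1
  apply Finset.filter_congr
  intro b _
  simp only [sg_flip, not_not]

/-- The central sign computation. -/
lemma scalar_main (i : Fin n) (s : Finset (Fin (2 * n))) (κ : ℝ) (hκ : κ * κ = 1)
    (hr : dxI n i ∈ s) :
    (esg (smap s) (smap s)ᶜ * κ * epsJ s) * (esg {dxiI n i} (smap s)ᶜ
      * (esg (insert (dxI n i) sᶜ) (s.erase (dxI n i)) * κ
          * epsJ ({dxiI n i} ∪ (smap s)ᶜ)))
    = (-1:ℝ)^n * esg {dxI n i} (s.erase (dxI n i)) := by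
  conv_lhs => rw [← insert_compl_eq_erase (s := s) (r := dxI n i)]
  set r : Fin (2 * n) := dxI n i with hrdef
  set c : Fin (2 * n) := dxiI n i with hcdef
  set u : Finset (Fin (2 * n)) := (smap s)ᶜ with hudef
  set p : ℕ := (s.filter fun b => b.1 < n).card with hpdef
  set q : ℕ := (s.filter fun b => ¬ b.1 < n).card with hqdef
  set ρ : ℕ := (s.filter (· < r)).card with hρdef
  have hk : p + q = s.card := Finset.card_filter_add_card_filter_not _
  have hkle := card_le_2n s
  have hp := p_le s
  have hq := q_le s
  -- ρ ≤ r.1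
  have hρcompl : ρ + (sᶜ.filter (· < r)).card = r.1 := by
    rw [hρdef, filter_compl_card, card_univ_filter_lt]
  have hρr : ρ ≤ r.1 := by omega
  -- F5
  have F5 : esg (smap s) (smap s)ᶜ = (-1)^(n * (p + q)) * esg s sᶜ := by
    rw [esg_smap_compl, hk]
  -- F3
  have hrnot : r ∉ sᶜ := by rw [Finset.mem_compl, not_not]; exact hr
  have F3 : esg (insert r sᶜ) (insert r sᶜ)ᶜ
      = (-1)^(r.1 + (2 * n - (p + q))) * ((-1)^((p+q) * (2*n - (p+q))) * esg s sᶜ) := by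
    rw [esg_insert_compl hrnot, compl_compl, card_compl']
    rw [esg_flip disjoint_compl_right, card_compl', ← hk]
  -- counts in smap s
  have cq : ((smap s).filter fun b => b.1 < n).card = q := by
    rw [filter_smap_X, card_smap]
  have cp : ((smap s).filter fun b => ¬ b.1 < n).card = p := by
    rw [filter_smap_Xi, card_smap]
  have cuX : (u.filter fun b => b.1 < n).card = n - q := by
    have h := filter_compl_card (smap s) (fun b => b.1 < n)
    rw [cq, cardX] at h
    rw [← hudef] at h
    omega
  have cuXi : (u.filter fun b => ¬ b.1 < n).card = n - p := by
    have h := filter_compl_card (smap s) (fun b => ¬ b.1 < n)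
    have h3 := Finset.card_filter_add_card_filter_not
      (s := (univ : Finset (Fin (2 * n)))) (p := fun b => b.1 < n)
    simp only [Finset.card_univ, Fintype.card_fin] at h3
    have h4 := cardX (n := n)
    rw [cp] at h
    rw [← hudef] at h
    omega
  have hcu : c ∉ u := by
    rw [hudef, Finset.mem_compl, not_not, mem_smap, hcdef, sg_dxiI]
    exact hr
  -- epsJ of w
  have cwX : (({c} ∪ u).filter fun b => b.1 < n).card = n - q := by
    rw [Finset.filter_union, Finset.filter_singleton, if_neg (dxiI_ge i), Finset.empty_union, cuX]
  have cwXi : (({c} ∪ u).filter fun b => ¬ b.1 < n).card = (n - p) + 1 := by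
    rw [Finset.filter_union, Finset.filter_singleton, if_pos (dxiI_ge i),
      Finset.card_union_of_disjoint, Finset.card_singleton, cuXi]
    · omega
    · simp only [Finset.disjoint_singleton_left, Finset.mem_filter]
      exact fun hcc => hcu hcc.1
  have hepsw : epsJ ({c} ∪ u) = ((-1:ℝ))^((n - q) * ((n - p) + 1)) := by
    rw [epsJ, cwX, cwXi]
  have hepss : epsJ s = ((-1:ℝ))^(p * q) := rfl
  -- esg {c} u
  have part1 : ((u.filter fun b => b.1 < n).filter (· < c)) = u.filter fun b => b.1 < n := by
    apply Finset.filter_true_of_mem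
    intro b hb
    rw [Finset.mem_filter] at hb
    rw [Fin.lt_def, hcdef, dxiI_val]
    omega
  have part2 : ((u.filter fun b => ¬ b.1 < n).filter (· < c)).card = r.1 - ρ := by
    have hu2 : u = smap sᶜ := (smap_compl s).symm
    have e1 : (u.filter fun b => ¬ b.1 < n) = smap (sᶜ.filter fun b => b.1 < n) := by
      rw [hu2, filter_smap_Xi]
    have e2 : ((smap (sᶜ.filter fun b => b.1 < n)).filter (· < c))
        = smap ((sᶜ.filter fun b => b.1 < n).filter (· < r)) := by
      rw [filter_smap]
      congr 1
      apply Finset.filter_congr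
      intro b hb
      rw [Finset.mem_filter] at hb
      simp only [eq_iff_iff, Fin.lt_def, sg_val_lt hb.2, hcdef, dxiI_val, hrdef, dxI_val]
      omega
    have e3 : ((sᶜ.filter fun b => b.1 < n).filter (· < r)) = sᶜ.filter (· < r) := by
      ext b
      simp only [Finset.mem_filter]
      constructor
      · rintro ⟨⟨h1, _⟩, h2⟩; exact ⟨h1, h2⟩
      · rintro ⟨h1, h2⟩
        refine ⟨⟨h1, ?_⟩, h2⟩
        have h3 := dxI_lt i
        rw [Fin.lt_def] at h2
        omega
    rw [e1, e2, card_smap, e3]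
    omega
  have hNc : Nsg {c} u = (n - q) + (r.1 - ρ) := by
    rw [Nsg_singleton_left, card_filter_split, part1, cuX, part2]
  have hesgc : esg {c} u = ((-1:ℝ))^((n - q) + (r.1 - ρ)) := by rw [esg, hNc]
  -- esg {r} (s.erase r)
  have hesgr : esg {r} (s.erase r) = ((-1:ℝ))^ρ := by
    rw [esg, Nsg_singleton_left]
    congr 2
    ext b
    simp only [Finset.mem_filter, Finset.mem_erase]
    constructor
    · rintro ⟨⟨_, h1⟩, h2⟩; exact ⟨h1, h2⟩
    · rintro ⟨h1, h2⟩
      exact ⟨⟨fun he => absurd (he ▸ h2) (lt_irrefl r), h1⟩, h2⟩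
  have hEsq := esg_sq s sᶜ
  calc (esg (smap s) (smap s)ᶜ * κ * epsJ s) * (esg {c} u
      * (esg (insert r sᶜ) (insert r sᶜ)ᶜ * κ * epsJ ({c} ∪ u)))
      = ((-1:ℝ))^(n*(p+q)) * (-1)^(r.1 + (2*n - (p+q))) * (-1)^((p+q)*(2*n-(p+q))) * (-1)^(p*q)
          * (-1)^((n-q)*((n-p)+1)) * (-1)^((n-q) + (r.1-ρ))
          * (esg s sᶜ * esg s sᶜ) * (κ * κ) := by
        rw [F5, F3, hepsw, hepss, hesgc]
        ring
    _ = ((-1:ℝ))^(n*(p+q) + (r.1 + (2*n - (p+q))) + (p+q)*(2*n-(p+q)) + p*q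
          + ((n-q)*((n-p)+1)) + ((n-q) + (r.1-ρ))) := by
        rw [hEsq, hκ, neg_pow_merge]
        ring
    _ = ((-1:ℝ))^(n + ρ) := parity_main n p q r.1 ρ hp hq hρr
    _ = (-1:ℝ)^n * esg {r} (s.erase r) := by rw [hesgr, pow_add]

end SFaux
namespace SFaux
open Finset

variable {n : ℕ}

lemma hodge_wedge_hodge_es
    (Jop : SForm n →ₗ[ℝ] SForm n)
    (hJone : Jop (sOne n) = sOne n)
    (hJmul : ∀ x y : SForm n, Jop (wedge x y) = wedge (Jop x) (Jop y))
    (hJdx : ∀ i, Jop (sDx n i) = sDxi n i)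
    (hJdxi : ∀ i, Jop (sDxi n i) = sDx n i)
    (hodge : SForm n →ₗ[ℝ] SForm n)
    (hodgeDeg : ∀ (k : ℕ) (x : SForm n), IsForm k x → IsForm (2 * n - k) (hodge x))
    (hodgeChar : ∀ (k : ℕ) (x y : SForm n), IsForm k x → IsForm k y →
        wedge x (hodge y) = sip x (Jop y) • omegaTop n)
    (i : Fin n) (s : Finset (Fin (2 * n))) :
    hodge (wedge (sDxi n i) (hodge (es s))) = ((-1:ℝ)^n) • iot (dxI n i) (es s) := by
  rw [hodge_es Jop hJone hJmul hJdx hJdxi hodge hodgeDeg hodgeChar s]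
  rw [sDxi_eq, wedge_smul_right, map_smul, iot_es]
  by_cases hr : dxI n i ∈ s
  · rw [if_pos hr]
    have hcu : dxiI n i ∉ (smap s)ᶜ := by
      rw [Finset.mem_compl, not_not, mem_smap, sg_dxiI]; exact hr
    have hd : Disjoint {dxiI n i} (smap s)ᶜ := by
      rw [Finset.disjoint_singleton_left]; exact hcu
    rw [wedge_es_es hd, map_smul,
      hodge_es Jop hJone hJmul hJdx hJdxi hodge hodgeDeg hodgeChar _]
    have hsm : smap ({dxiI n i} ∪ (smap s)ᶜ) = insert (dxI n i) sᶜ := by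
      rw [smap_union, smap_singleton, sg_dxiI, smap_compl_smap, Finset.insert_eq]
    rw [hsm, insert_compl_eq_erase]
    rw [smul_smul, smul_smul, smul_smul]
    congr 1
    rw [mul_assoc]
    exact scalar_main i s (omegaTop n univ) kappa_sq hr
  · rw [if_neg hr]
    have hcu : dxiI n i ∈ (smap s)ᶜ := by
      rw [Finset.mem_compl, mem_smap, sg_dxiI]; exact hr
    have hnd : ¬ Disjoint {dxiI n i} (smap s)ᶜ := by
      rw [Finset.disjoint_singleton_left, not_not]; exact hcu
    rw [wedge_es_es_nd hnd, smul_zero, map_zero, smul_zero]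

end SFaux
namespace SFaux
open Finset

variable {n : ℕ}

lemma ite_mul_sum {P : Prop} [Decidable P] (a : ℝ) (f : Fin n → ℝ) :
    (if P then a * ∑ j : Fin n, f j else 0) = ∑ j : Fin n, if P then a * f j else 0 := by
  split_ifs with h
  · rw [Finset.mul_sum]
  · rw [Finset.sum_const_zero]

lemma c_notmem_Pp {i j : Fin n} (h : j ≠ i) : dxiI n i ∉ Pp j := by
  rw [mem_Pp]
  rintro (h1 | h1) <;>
    (have := congrArg Fin.val h1; simp [dxI, dxiI] at this; first | omega | exact h (Fin.ext (by omega)).symm)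

lemma r_lt_c (i : Fin n) : dxI n i < dxiI n i := by
  rw [Fin.lt_def, dxI_val, dxiI_val]; omega

lemma esg_single_lt {a b : Fin (2 * n)} (h : a < b) : esg {a} {b} = 1 := by
  rw [esg, Nsg_singleton_left, Finset.filter_singleton, if_neg (not_lt.2 h.le)]
  simp

lemma esg_single_gt {a b : Fin (2 * n)} (h : a < b) : esg {b} {a} = -1 := by
  rw [esg, Nsg_singleton_left, Finset.filter_singleton, if_pos h]
  simp

lemma union_sdiff_singleton {a t : Finset (Fin (2 * n))} {c : Fin (2 * n)} (hc : c ∉ a) :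
    (a ∪ t) \ {c} = a ∪ (t \ {c}) := by
  ext b
  simp only [Finset.mem_union, Finset.mem_sdiff, Finset.mem_singleton]
  constructor
  · rintro ⟨h1 | h1, h2⟩
    · exact Or.inl h1
    · exact Or.inr ⟨h1, h2⟩
  · rintro (h1 | ⟨h1, h2⟩)
    · exact ⟨Or.inl h1, fun he => hc (he ▸ h1)⟩
    · exact ⟨Or.inr h1, h2⟩

lemma singleton_union_sdiff {t : Finset (Fin (2 * n))} {c : Fin (2 * n)} (hc : c ∈ t) :
    {c} ∪ (t \ {c}) = t := by
  ext b
  simp only [Finset.mem_union, Finset.mem_sdiff, Finset.mem_singleton]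
  constructor
  · rintro (rfl | ⟨h1, _⟩)
    · exact hc
    · exact h1
  · intro hb
    by_cases he : b = c
    · exact Or.inl he
    · exact Or.inr ⟨hb, he⟩

lemma disj_Pp_iff {i : Fin n} {t : Finset (Fin (2 * n))} :
    Disjoint (Pp i) t ↔ (dxI n i ∉ t ∧ dxiI n i ∉ t) := by
  rw [Pp, Finset.disjoint_insert_left, Finset.disjoint_singleton_left]

lemma Pp_eq (i : Fin n) : Pp i = {dxI n i} ∪ {dxiI n i} := by
  rw [Pp, Finset.insert_eq]

lemma disj_rc (i : Fin n) : Disjoint ({dxI n i} : Finset (Fin (2*n))) {dxiI n i} :=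
  Finset.disjoint_singleton.2 (dxI_ne_dxiI i)

/-- sign identity for the `j ≠ i` cancellation. -/
lemma cancel_sign {j : Fin n} {t : Finset (Fin (2 * n))} {c : Fin (2 * n)} (hcP : c ∉ Pp j)
    (hct : c ∈ t) (hd2 : Disjoint (Pp j) (t \ {c})) :
    esg (Pp j) t * esg {c} ((Pp j ∪ t) \ {c}) = esg {c} (t \ {c}) * esg (Pp j) (t \ {c}) := by
  have hd1 : Disjoint ({c} : Finset (Fin (2*n))) (t \ {c}) := by
    simp [Finset.disjoint_singleton_left]
  have e1 : esg (Pp j) ({c} ∪ (t \ {c})) = esg (Pp j) {c} * esg (Pp j) (t \ {c}) :=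
    esg_union_right _ hd1
  rw [singleton_union_sdiff hct] at e1
  have e2 : esg {c} ((Pp j ∪ t) \ {c}) = esg {c} (Pp j) * esg {c} (t \ {c}) := by
    rw [union_sdiff_singleton hcP]
    exact esg_union_right _ hd2
  have e3 : esg (Pp j) {c} = esg {c} (Pp j) := by
    refine (esg_comm' ?_ ?_).symm
    · simp [Finset.disjoint_singleton_left, hcP]
    · rw [Finset.card_singleton, Pp_card]
      decide
  have e4 := esg_sq {c} (Pp j)
  calc esg (Pp j) t * esg {c} ((Pp j ∪ t) \ {c})
      = (esg {c} (Pp j) * esg {c} (Pp j)) * (esg (Pp j) (t \ {c}) * esg {c} (t \ {c})) := by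
        rw [e1, e2, e3]; ring
    _ = esg {c} (t \ {c}) * esg (Pp j) (t \ {c}) := by rw [e4]; ring

lemma Ppi_union_sdiff {i : Fin n} {t : Finset (Fin (2 * n))} (hct : dxiI n i ∈ t) :
    Pp i ∪ (t \ {dxiI n i}) = insert (dxI n i) t := by
  ext b
  simp only [Finset.mem_union, Finset.mem_sdiff, Finset.mem_singleton, Finset.mem_insert, mem_Pp]
  constructor
  · rintro ((rfl | rfl) | ⟨h1, _⟩)
    · exact Or.inl rfl
    · exact Or.inr hct
    · exact Or.inr h1
  · rintro (rfl | h1)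
    · exact Or.inl (Or.inl rfl)
    · by_cases he : b = dxiI n i
      · exact Or.inl (Or.inr he)
      · exact Or.inr ⟨h1, he⟩

lemma Ppi_union_sdiff' {i : Fin n} {t : Finset (Fin (2 * n))} (hct : dxiI n i ∉ t) :
    (Pp i ∪ t) \ {dxiI n i} = insert (dxI n i) t := by
  ext b
  simp only [Finset.mem_union, Finset.mem_sdiff, Finset.mem_singleton, Finset.mem_insert, mem_Pp]
  constructor
  · rintro ⟨(rfl | rfl) | h1, h2⟩
    · exact Or.inl rfl
    · exact absurd rfl h2
    · exact Or.inr h1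
  · rintro (rfl | h1)
    · exact ⟨Or.inl (Or.inl rfl), dxI_ne_dxiI i⟩
    · exact ⟨Or.inr h1, fun he => hct (he ▸ h1)⟩

lemma sign_i_cmem {i : Fin n} {t : Finset (Fin (2 * n))} (hct : dxiI n i ∈ t) :
    esg {dxiI n i} (t \ {dxiI n i}) * esg (Pp i) (t \ {dxiI n i}) = esg {dxI n i} t := by
  have hd1 : Disjoint ({dxiI n i} : Finset (Fin (2*n))) (t \ {dxiI n i}) := by
    simp [Finset.disjoint_singleton_left]
  have e1 : esg (Pp i) (t \ {dxiI n i})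
      = esg {dxI n i} (t \ {dxiI n i}) * esg {dxiI n i} (t \ {dxiI n i}) := by
    rw [Pp_eq, esg_union_left _ (disj_rc i)]
  have e2 : esg {dxI n i} ({dxiI n i} ∪ (t \ {dxiI n i}))
      = esg {dxI n i} {dxiI n i} * esg {dxI n i} (t \ {dxiI n i}) := esg_union_right _ hd1
  rw [singleton_union_sdiff hct] at e2
  have e3 : esg {dxI n i} {dxiI n i} = 1 := esg_single_lt (r_lt_c i)
  have e4 := esg_sq {dxiI n i} (t \ {dxiI n i})
  calc esg {dxiI n i} (t \ {dxiI n i}) * esg (Pp i) (t \ {dxiI n i})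
      = (esg {dxiI n i} (t \ {dxiI n i}) * esg {dxiI n i} (t \ {dxiI n i}))
          * esg {dxI n i} (t \ {dxiI n i}) := by rw [e1]; ring
    _ = esg {dxI n i} t := by rw [e4, e2, e3]; try ring

lemma sign_i_cnot {i : Fin n} {t : Finset (Fin (2 * n))} (hct : dxiI n i ∉ t)
    (hrt : dxI n i ∉ t) :
    esg (Pp i) t * esg {dxiI n i} (insert (dxI n i) t) = -(esg {dxI n i} t) := by
  have hd1 : Disjoint ({dxI n i} : Finset (Fin (2*n))) t := by
    simp [Finset.disjoint_singleton_left, hrt]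
  have e1 : esg (Pp i) t = esg {dxI n i} t * esg {dxiI n i} t := by
    rw [Pp_eq, esg_union_left _ (disj_rc i)]
  have e2 : esg {dxiI n i} (insert (dxI n i) t)
      = esg {dxiI n i} {dxI n i} * esg {dxiI n i} t := by
    rw [Finset.insert_eq]
    exact esg_union_right _ hd1
  have e3 : esg {dxiI n i} {dxI n i} = -1 := esg_single_gt (r_lt_c i)
  have e4 := esg_sq {dxiI n i} t
  calc esg (Pp i) t * esg {dxiI n i} (insert (dxI n i) t)
      = (esg {dxiI n i} t * esg {dxiI n i} t) * (esg {dxiI n i} {dxI n i} * esg {dxI n i} t) := by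
        rw [e1, e2]; ring
    _ = -(esg {dxI n i} t) := by rw [e3, e4]; ring

lemma commutator_es
    (Lam : SForm n →ₗ[ℝ] SForm n)
    (hLam : ∀ x y : SForm n, sip (Lop n x) y = sip x (Lam y))
    (i : Fin n) (y : SForm n) (t : Finset (Fin (2 * n))) :
    Lam (wedge (sDxi n i) y) t - wedge (sDxi n i) (Lam y) t = -(iot (dxI n i) y t) := by
  rw [Lam_apply Lam hLam, sDxi_eq]
  simp only [wedge_es_left]
  rw [Lam_apply Lam hLam y (t \ {dxiI n i})]
  rw [ite_mul_sum, ← Finset.sum_sub_distrib]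
  rw [Finset.sum_eq_single i ?side1 (by simp)]
  case side1 =>
    intro j _ hji
    have hcP : dxiI n i ∉ Pp j := c_notmem_Pp hji
    by_cases hct : dxiI n i ∈ t
    · have hsub : ({dxiI n i} : Finset (Fin (2*n))) ⊆ t := Finset.singleton_subset_iff.2 hct
      rw [if_pos hsub]
      by_cases hdj : Disjoint (Pp j) (t \ {dxiI n i})
      · have hdjt : Disjoint (Pp j) t := by
          have := singleton_union_sdiff hct
          rw [← this]
          rw [Finset.disjoint_union_right]
          exact ⟨by simp [Finset.disjoint_singleton_right, hcP], hdj⟩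
        rw [if_pos hdjt, if_pos hdj]
        have hsubc : ({dxiI n i} : Finset (Fin (2*n))) ⊆ Pp j ∪ t :=
          Finset.singleton_subset_iff.2 (Finset.mem_union_right _ hct)
        rw [if_pos hsubc]
        have hset : (Pp j ∪ t) \ {dxiI n i} = Pp j ∪ (t \ {dxiI n i}) :=
          union_sdiff_singleton hcP
        rw [hset]
        have hsign := cancel_sign hcP hct hdj
        rw [union_sdiff_singleton hcP] at hsign
        linear_combination (y (Pp j ∪ (t \ {dxiI n i}))) * hsign
      · have hdjt : ¬ Disjoint (Pp j) t := by
          intro hc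
          exact hdj (hc.mono_right (Finset.sdiff_subset))
        rw [if_neg hdjt, if_neg hdj]
        ring
    · have hsub : ¬ ({dxiI n i} : Finset (Fin (2*n))) ⊆ t := by
        rw [Finset.singleton_subset_iff]; exact hct
      rw [if_neg hsub]
      by_cases hdjt : Disjoint (Pp j) t
      · have hsubc : ¬ ({dxiI n i} : Finset (Fin (2*n))) ⊆ Pp j ∪ t := by
          rw [Finset.singleton_subset_iff, Finset.mem_union]
          rintro (h | h)
          · exact hcP h
          · exact hct h
        rw [if_pos hdjt, if_neg hsubc]
        ring
      · rw [if_neg hdjt]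
        ring
  -- main term j = i
  have hcPi : dxiI n i ∈ Pp i := by rw [mem_Pp]; right; rfl
  by_cases hct : dxiI n i ∈ t
  · have hdit : ¬ Disjoint (Pp i) t := by
      rw [Finset.disjoint_left]
      intro hc
      exact (hc hcPi) hct
    rw [if_neg hdit]
    have hsub : ({dxiI n i} : Finset (Fin (2*n))) ⊆ t := Finset.singleton_subset_iff.2 hct
    rw [if_pos hsub]
    by_cases hrt : dxI n i ∈ t
    · have hdi : ¬ Disjoint (Pp i) (t \ {dxiI n i}) := by
        rw [Finset.disjoint_left]
        intro hc
        have hrPp : dxI n i ∈ Pp i := by rw [mem_Pp]; left; rfl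
        exact (hc hrPp) (Finset.mem_sdiff.2 ⟨hrt, by simp [dxI_ne_dxiI i]⟩)
      rw [if_neg hdi]
      rw [iot, if_pos hrt]
      ring
    · have hdi : Disjoint (Pp i) (t \ {dxiI n i}) := by
        rw [disj_Pp_iff]
        constructor
        · intro hc
          exact hrt (Finset.mem_sdiff.1 hc).1
        · simp
      rw [if_pos hdi]
      rw [iot, if_neg hrt, Ppi_union_sdiff hct]
      have hsign := sign_i_cmem (i := i) hct
      linear_combination (-(y (insert (dxI n i) t))) * hsign
  · have hsub : ¬ ({dxiI n i} : Finset (Fin (2*n))) ⊆ t := by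
      rw [Finset.singleton_subset_iff]; exact hct
    rw [if_neg hsub]
    by_cases hrt : dxI n i ∈ t
    · have hdit : ¬ Disjoint (Pp i) t := by
        rw [Finset.disjoint_left]
        intro hc
        have hrPp : dxI n i ∈ Pp i := by rw [mem_Pp]; left; rfl
        exact (hc hrPp) hrt
      rw [if_neg hdit]
      rw [iot, if_pos hrt]
      ring
    · have hdit : Disjoint (Pp i) t := disj_Pp_iff.2 ⟨hrt, hct⟩
      rw [if_pos hdit]
      have hsubc : ({dxiI n i} : Finset (Fin (2*n))) ⊆ Pp i ∪ t :=
        Finset.singleton_subset_iff.2 (Finset.mem_union_left _ hcPi)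
      rw [if_pos hsubc, Ppi_union_sdiff' hct]
      rw [iot, if_neg hrt]
      have hsign := sign_i_cnot hct hrt
      linear_combination (y (insert (dxI n i) t)) * hsign

end SFaux
namespace SFaux
open Finset

variable {n : ℕ}

lemma fderiv_linear_comp (L : SForm n →ₗ[ℝ] SForm n) (α : (Fin n → ℝ) → SForm n)
    (hα : Differentiable ℝ α) (x v : Fin n → ℝ) :
    fderiv ℝ (fun y => L (α y)) x v = L (fderiv ℝ α x v) := by
  have h2 := fderiv_comp (𝕜 := ℝ) x (L.toContinuousLinearMap.differentiableAt) (hα x)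
  rw [ContinuousLinearMap.fderiv] at h2
  have h3 : (fun y => L (α y)) = (⇑L.toContinuousLinearMap) ∘ α := by
    funext y
    simp [LinearMap.coe_toContinuousLinearMap']
  rw [h3, h2]
  simp [LinearMap.coe_toContinuousLinearMap']

lemma hodge_wedge_hodge
    (Jop : SForm n →ₗ[ℝ] SForm n)
    (hJone : Jop (sOne n) = sOne n)
    (hJmul : ∀ x y : SForm n, Jop (wedge x y) = wedge (Jop x) (Jop y))
    (hJdx : ∀ i, Jop (sDx n i) = sDxi n i)
    (hJdxi : ∀ i, Jop (sDxi n i) = sDx n i)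
    (hodge : SForm n →ₗ[ℝ] SForm n)
    (hodgeDeg : ∀ (k : ℕ) (x : SForm n), IsForm k x → IsForm (2 * n - k) (hodge x))
    (hodgeChar : ∀ (k : ℕ) (x y : SForm n), IsForm k x → IsForm k y →
        wedge x (hodge y) = sip x (Jop y) • omegaTop n)
    (i : Fin n) (v : SForm n) :
    hodge (wedge (sDxi n i) (hodge v)) = ((-1:ℝ)^n) • iot (dxI n i) v := by
  calc hodge (wedge (sDxi n i) (hodge v))
      = hodge (wedge (sDxi n i) (hodge (∑ s : Finset (Fin (2*n)), v s • es s))) := by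
        rw [← decompose v]
    _ = hodge (wedge (sDxi n i) (∑ s : Finset (Fin (2*n)), v s • hodge (es s))) := by
        congr 1
        rw [map_sum]
        exact congrArg (wedge (sDxi n i))
          (Finset.sum_congr rfl (fun s _ => map_smul hodge (v s) (es s)))
    _ = hodge (∑ s : Finset (Fin (2*n)), v s • wedge (sDxi n i) (hodge (es s))) := by
        congr 1
        rw [wedge_sum_right]
        exact Finset.sum_congr rfl (fun s _ => wedge_smul_right (v s) _ _)
    _ = ∑ s : Finset (Fin (2*n)), v s • hodge (wedge (sDxi n i) (hodge (es s))) := by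
        rw [map_sum]
        exact Finset.sum_congr rfl (fun s _ => map_smul hodge (v s) _)
    _ = ∑ s : Finset (Fin (2*n)), v s • (((-1:ℝ)^n) • iot (dxI n i) (es s)) :=
        Finset.sum_congr rfl (fun s _ => by
          rw [hodge_wedge_hodge_es Jop hJone hJmul hJdx hJdxi hodge hodgeDeg hodgeChar i s])
    _ = ((-1:ℝ)^n) • ∑ s : Finset (Fin (2*n)), v s • iot (dxI n i) (es s) := by
        rw [Finset.smul_sum]
        exact Finset.sum_congr rfl (fun s _ => smul_comm _ _ _)
    _ = ((-1:ℝ)^n) • iot (dxI n i) v := by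
        congr 1
        calc ∑ s : Finset (Fin (2*n)), v s • iot (dxI n i) (es s)
            = ∑ s : Finset (Fin (2*n)), iot (dxI n i) (v s • es s) :=
              Finset.sum_congr rfl (fun s _ => (iot_smul _ _ _).symm)
          _ = iot (dxI n i) (∑ s : Finset (Fin (2*n)), v s • es s) := (iot_sum _ _ _).symm
          _ = iot (dxI n i) v := by rw [← decompose v]

lemma key_identity
    (Lam : SForm n →ₗ[ℝ] SForm n)
    (hLam : ∀ x y : SForm n, sip (Lop n x) y = sip x (Lam y))
    (Jop : SForm n →ₗ[ℝ] SForm n)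
    (hJone : Jop (sOne n) = sOne n)
    (hJmul : ∀ x y : SForm n, Jop (wedge x y) = wedge (Jop x) (Jop y))
    (hJdx : ∀ i, Jop (sDx n i) = sDxi n i)
    (hJdxi : ∀ i, Jop (sDxi n i) = sDx n i)
    (hodge : SForm n →ₗ[ℝ] SForm n)
    (hodgeDeg : ∀ (k : ℕ) (x : SForm n), IsForm k x → IsForm (2 * n - k) (hodge x))
    (hodgeChar : ∀ (k : ℕ) (x y : SForm n), IsForm k x → IsForm k y →
        wedge x (hodge y) = sip x (Jop y) • omegaTop n)
    (i : Fin n) (v : SForm n) :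
    hodge (wedge (sDxi n i) (hodge v))
      = ((-1:ℝ)^(n+1)) • (Lam (wedge (sDxi n i) v) - wedge (sDxi n i) (Lam v)) := by
  have hcomm : Lam (wedge (sDxi n i) v) - wedge (sDxi n i) (Lam v) = -(iot (dxI n i) v) := by
    funext t
    exact commutator_es Lam hLam i v t
  rw [hcomm, hodge_wedge_hodge Jop hJone hJmul hJdx hJdxi hodge hodgeDeg hodgeChar i v,
    smul_neg, pow_succ]
  funext t
  simp only [Pi.smul_apply, Pi.neg_apply, smul_eq_mul]
  ring

end SFaux
/-- for every smooth super form `α` on `ℝⁿ` (flat metric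
`ω = Σ dx_i ∧ dξ_i`), `* d# * α = (−1)^{n+1} [Λ, d#]α`, where `Λ` is the adjoint of
`L = ω ∧ ·`, `J` the algebra automorphism exchanging `dx_i` and `dξ_i`, and the
Hodge star the (unique) linear map sending `k`-forms to `(2n−k)`-forms with
`α ∧ *β = ⟨α, Jβ⟩ ω_n` for `k`-forms `α, β`; all acting on super forms pointwise. -/
theorem star_dsharp_star (n : ℕ) (hn : 1 ≤ n)
    (Lam : SForm n →ₗ[ℝ] SForm n)
    (hLam : ∀ x y : SForm n, sip (Lop n x) y = sip x (Lam y))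
    (Jop : SForm n →ₗ[ℝ] SForm n)
    (hJone : Jop (sOne n) = sOne n)
    (hJmul : ∀ x y : SForm n, Jop (wedge x y) = wedge (Jop x) (Jop y))
    (hJdx : ∀ i, Jop (sDx n i) = sDxi n i)
    (hJdxi : ∀ i, Jop (sDxi n i) = sDx n i)
    (hodge : SForm n →ₗ[ℝ] SForm n)
    (hodgeDeg : ∀ (k : ℕ) (x : SForm n), IsForm k x → IsForm (2 * n - k) (hodge x))
    (hodgeChar : ∀ (k : ℕ) (x y : SForm n), IsForm k x → IsForm k y →
        wedge x (hodge y) = sip x (Jop y) • omegaTop n)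
    (α : (Fin n → ℝ) → SForm n) (hα : ContDiff ℝ (⊤ : ℕ∞) α) (x : Fin n → ℝ) :
    hodge (dSh n (fun y => hodge (α y)) x)
      = ((-1 : ℝ) ^ (n + 1)) • (Lam (dSh n α x) - dSh n (fun y => Lam (α y)) x) := by
  have hdiff : Differentiable ℝ α := hα.differentiable (by simp)
  calc hodge (dSh n (fun y => hodge (α y)) x)
      = hodge (∑ i : Fin n,
          wedge (sDxi n i) (hodge (fderiv ℝ α x (Pi.single i 1)))) := by
        unfold dSh
        congr 1
        exact Finset.sum_congr rfl (fun i _ => congrArg (wedge (sDxi n i))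
          (SFaux.fderiv_linear_comp hodge α hdiff x _))
    _ = ∑ i : Fin n,
          hodge (wedge (sDxi n i) (hodge (fderiv ℝ α x (Pi.single i 1)))) :=
        map_sum hodge _ _
    _ = ∑ i : Fin n, ((-1:ℝ)^(n+1)) •
          (Lam (wedge (sDxi n i) (fderiv ℝ α x (Pi.single i 1)))
            - wedge (sDxi n i) (Lam (fderiv ℝ α x (Pi.single i 1)))) :=
        Finset.sum_congr rfl (fun i _ =>
          SFaux.key_identity Lam hLam Jop hJone hJmul hJdx hJdxi hodge hodgeDeg hodgeChar i _)
    _ = ((-1:ℝ)^(n+1)) •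
          ((∑ i : Fin n, Lam (wedge (sDxi n i) (fderiv ℝ α x (Pi.single i 1))))
            - ∑ i : Fin n, wedge (sDxi n i) (Lam (fderiv ℝ α x (Pi.single i 1)))) := by
        rw [smul_sub, Finset.smul_sum, Finset.smul_sum, ← Finset.sum_sub_distrib]
        exact Finset.sum_congr rfl (fun i _ => smul_sub _ _ _)
    _ = ((-1 : ℝ) ^ (n + 1)) • (Lam (dSh n α x) - dSh n (fun y => Lam (α y)) x) := by
        have h1 : Lam (dSh n α x)
            = ∑ i : Fin n, Lam (wedge (sDxi n i) (fderiv ℝ α x (Pi.single i 1))) := by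
          rw [dSh]
          exact map_sum Lam _ _
        have h2 : dSh n (fun y => Lam (α y)) x
            = ∑ i : Fin n, wedge (sDxi n i) (Lam (fderiv ℝ α x (Pi.single i 1))) := by
          unfold dSh
          exact Finset.sum_congr rfl (fun i _ => congrArg (wedge (sDxi n i))
            (SFaux.fderiv_linear_comp Lam α hdiff x _))
        rw [h1, h2]
end
end

section
/- For all smooth compactly supported super forms α and β on ℝⁿ (flat ℝ-Kähler metric ω = Σ dx_i∧dξ_i): ∫_{ℝⁿ} ⟨(dα)(x), β(x)⟩ dx = ∫_{ℝⁿ} ⟨α(x), Λ(d#β)(x) − d#(Λβ)(x)⟩ dx and ∫_{ℝⁿ} ⟨(d#α)(x), β(x)⟩ dx = −∫_{ℝⁿ} ⟨α(x), Λ(dβ)(x) − d(Λβ)(x)⟩ dx; i.e. the formal L²-adjoint of d is [Λ, d#] and the formal L²-adjoint of d# is −[Λ, d]. -/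
open scoped BigOperators

noncomputable section

open MeasureTheory


/-! ### Auxiliary algebraic layer -/

section Aux

variable {n : ℕ}

/-- Number of elements of `s` smaller than `k`. -/
def cnt (k : Fin (2 * n)) (s : Finset (Fin (2 * n))) : ℕ := (s.filter (· < k)).card

/-- Left exterior multiplication by the `k`-th basis vector, in coordinates. -/
def Eop (k : Fin (2 * n)) (x : SForm n) : SForm n :=
  fun s => if k ∈ s then (-1 : ℝ) ^ (cnt k s) * x (s.erase k) else 0

/-- Interior multiplication (adjoint of `Eop k`), in coordinates. -/
def Iop (k : Fin (2 * n)) (y : SForm n) : SForm n :=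
  fun t => if k ∈ t then 0 else (-1 : ℝ) ^ (cnt k t) * y (insert k t)

lemma cnt_insert {k : Fin (2 * n)} {t : Finset (Fin (2 * n))} (h : k ∉ t) (l : Fin (2 * n)) :
    cnt l (insert k t) = cnt l t + (if k < l then 1 else 0) := by
  unfold cnt
  rw [Finset.filter_insert]
  split
  · rw [Finset.card_insert_of_notMem (fun hk => h (Finset.mem_of_mem_filter _ hk))]
  · simp

lemma cnt_erase_self (k : Fin (2 * n)) (t : Finset (Fin (2 * n))) :
    cnt k (t.erase k) = cnt k t := by
  unfold cnt
  rw [Finset.filter_erase, Finset.erase_eq_of_notMem (by simp)]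

lemma cnt_erase {l : Fin (2 * n)} {t : Finset (Fin (2 * n))} (h : l ∈ t) (k : Fin (2 * n)) :
    cnt k t = cnt k (t.erase l) + (if l < k then 1 else 0) := by
  conv_lhs => rw [← Finset.insert_erase h]
  rw [cnt_insert (Finset.notMem_erase l t)]

lemma card_prod_filter (A t : Finset (Fin (2 * n))) :
    ((A ×ˢ t).filter fun q => q.2 < q.1).card = ∑ a ∈ A, cnt a t := by
  rw [Finset.card_filter, Finset.sum_product]
  refine Finset.sum_congr rfl fun a _ => ?_
  rw [cnt, Finset.card_filter]

lemma sip_comm (x y : SForm n) : sip x y = sip y x := by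
  simp [sip, mul_comm]

lemma sip_sum_left {ι : Type*} (A : Finset ι) (f : ι → SForm n) (y : SForm n) :
    sip (∑ i ∈ A, f i) y = ∑ i ∈ A, sip (f i) y := by
  simp only [sip, Finset.sum_apply, Finset.sum_mul]
  exact Finset.sum_comm

lemma sip_sub_left (x x' y : SForm n) : sip (x - x') y = sip x y - sip x' y := by
  simp [sip, sub_mul, Finset.sum_sub_distrib]

lemma sip_smul_left (c : ℝ) (x y : SForm n) : sip (c • x) y = c * sip x y := by
  simp [sip, Finset.mul_sum, mul_assoc]

lemma wedge_one (k : Fin (2 * n)) (x : SForm n) :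
    wedge (fun s => if s = {k} then (1 : ℝ) else 0) x = Eop k x := by
  funext s
  unfold wedge
  have h : ∀ a ∈ s.powerset,
      (-1 : ℝ) ^ (((a ×ˢ (s \ a)).filter fun q => q.2 < q.1).card) *
          (if a = {k} then (1 : ℝ) else 0) * x (s \ a)
        = if a = {k} then ((-1 : ℝ) ^ (cnt k s) * x (s.erase k)) else 0 := by
    intro a ha
    by_cases hak : a = {k}
    · subst hak
      rw [if_pos rfl, if_pos rfl, mul_one]
      rw [Finset.sdiff_singleton_eq_erase, card_prod_filter, Finset.sum_singleton,
        cnt_erase_self]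
    · simp [hak]
  rw [Finset.sum_congr rfl h, Finset.sum_ite_eq' s.powerset {k}]
  rw [Eop]
  simp [Finset.singleton_subset_iff]

lemma wedge_sDx (i : Fin n) (x : SForm n) : wedge (sDx n i) x = Eop (dxI n i) x :=
  wedge_one (dxI n i) x

lemma wedge_sDxi (i : Fin n) (x : SForm n) : wedge (sDxi n i) x = Eop (dxiI n i) x :=
  wedge_one (dxiI n i) x

lemma sip_Eop (k : Fin (2 * n)) (x y : SForm n) : sip (Eop k x) y = sip x (Iop k y) := by
  unfold sip Eop Iop
  simp only [ite_mul, zero_mul, mul_ite, mul_zero]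
  rw [← Finset.sum_filter]
  rw [Finset.sum_congr rfl (fun (t : Finset (Fin (2 * n))) (_ : t ∈ Finset.univ) =>
    (ite_not (k ∈ t) (x t * ((-1 : ℝ) ^ cnt k t * y (insert k t))) 0).symm)]
  rw [← Finset.sum_filter]
  refine Finset.sum_bij' (fun s _ => s.erase k) (fun t _ => insert k t) ?_ ?_ ?_ ?_ ?_
  · intro s hs
    simp only [Finset.mem_filter, Finset.mem_univ, true_and] at hs ⊢
    exact Finset.notMem_erase k s
  · intro t ht
    simp only [Finset.mem_filter, Finset.mem_univ, true_and] at ht ⊢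
    exact Finset.mem_insert_self k t
  · intro s hs
    simp only [Finset.mem_filter, Finset.mem_univ, true_and] at hs
    exact Finset.insert_erase hs
  · intro t ht
    simp only [Finset.mem_filter, Finset.mem_univ, true_and] at ht
    exact Finset.erase_insert ht
  · intro s hs
    simp only [Finset.mem_filter, Finset.mem_univ, true_and] at hs
    rw [Finset.insert_erase hs, cnt_erase_self]
    ring

lemma Eop_sub (p : Fin (2 * n)) (u v : SForm n) : Eop p (u - v) = Eop p u - Eop p v := by
  funext s
  by_cases h : p ∈ s <;> simp [Eop, h, mul_sub]

lemma neg_one_sq_pow (c : ℕ) (r : ℝ) : (-1 : ℝ) ^ c * ((-1 : ℝ) ^ c * r) = r := by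
  rw [← mul_assoc, ← pow_add, Even.neg_one_pow ⟨c, rfl⟩, one_mul]

lemma I_E_same (k : Fin (2 * n)) (u : SForm n) :
    Iop k (Eop k u) = u - Eop k (Iop k u) := by
  funext t
  by_cases h : k ∈ t
  · have h1 : k ∉ t.erase k := Finset.notMem_erase k t
    simp only [Iop, Eop, Pi.sub_apply, if_pos h, if_neg h1]
    rw [Finset.insert_erase h, cnt_erase_self, neg_one_sq_pow]
    ring
  · have h1 : k ∈ insert k t := Finset.mem_insert_self k t
    simp only [Iop, Eop, Pi.sub_apply, if_neg h, if_pos h1]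
    rw [Finset.erase_insert h, cnt_insert h, if_neg (lt_irrefl k), add_zero, neg_one_sq_pow]
    ring

lemma I_E_ne {k l : Fin (2 * n)} (hkl : k ≠ l) (u : SForm n) :
    Iop k (Eop l u) = -(Eop l (Iop k u)) := by
  funext t
  by_cases hk : k ∈ t
  · by_cases hl : l ∈ t
    · have : k ∈ t.erase l := Finset.mem_erase_of_ne_of_mem hkl hk
      simp [Iop, Eop, hk, hl, this]
    · simp [Iop, Eop, hk, hl]
  · by_cases hl : l ∈ t
    · have hl' : l ∈ insert k t := Finset.mem_insert_of_mem hl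
      have hk' : k ∉ t.erase l := fun h' => hk (Finset.mem_of_mem_erase h')
      have hset : (insert k t).erase l = insert k (t.erase l) :=
        Finset.erase_insert_of_ne hkl
      simp only [Iop, Eop, Pi.neg_apply, if_neg hk, if_pos hl, if_pos hl', if_neg hk', hset]
      rw [cnt_insert hk l, cnt_erase hl k]
      rcases hkl.lt_or_gt with hlt | hlt
      · rw [if_pos hlt, if_neg (asymm hlt)]
        ring_nf
      · rw [if_neg (asymm hlt), if_pos hlt]
        ring_nf
    · have hl' : l ∉ insert k t := by
        simp only [Finset.mem_insert]
        rintro (rfl | h) <;> [exact hkl rfl; exact hl h]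
      simp [Iop, Eop, hk, hl, hl']

lemma dxI_lt_dxiI (i j : Fin n) : dxI n i < dxiI n j := by
  simp only [dxI, dxiI, Fin.lt_def]
  omega

lemma dxI_ne_dxiI (i j : Fin n) : dxI n i ≠ dxiI n j := ne_of_lt (dxI_lt_dxiI i j)

lemma dxiI_inj {i j : Fin n} (h : dxiI n i = dxiI n j) : i = j := by
  have := congrArg Fin.val h
  simp only [dxiI] at this
  exact Fin.ext (by omega)

lemma dxI_inj {i j : Fin n} (h : dxI n i = dxI n j) : i = j := by
  have := congrArg Fin.val h
  simp only [dxI] at this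
  exact Fin.ext this

/-- `dx_i ∧ dξ_i` is the indicator of the pair `{dxI i, dxiI i}`. -/
lemma wedge_dx_dxi (j : Fin n) :
    wedge (sDx n j) (sDxi n j) = fun s => if s = {dxI n j, dxiI n j} then (1 : ℝ) else 0 := by
  rw [show wedge (sDx n j) (sDxi n j) = Eop (dxI n j) (sDxi n j) from wedge_sDx j _]
  funext s
  set p := dxI n j
  set q := dxiI n j
  have hpq : p < q := dxI_lt_dxiI j j
  by_cases h : s = {p, q}
  · subst h
    have hp : p ∈ ({p, q} : Finset (Fin (2 * n))) := Finset.mem_insert_self _ _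
    have hq : p ∉ ({q} : Finset (Fin (2 * n))) := by
      simp only [Finset.mem_singleton]; exact ne_of_lt hpq
    simp only [Eop, if_pos hp, Finset.erase_insert hq, sDxi]
    have : cnt p ({p, q} : Finset (Fin (2 * n))) = 0 := by
      rw [cnt, Finset.card_eq_zero, Finset.filter_eq_empty_iff]
      intro x hx
      rcases Finset.mem_insert.1 hx with rfl | hx
      · exact lt_irrefl _
      · rw [Finset.mem_singleton] at hx
        subst hx
        exact not_lt.2 (le_of_lt hpq)
    rw [this]
    norm_num [q]
  · rw [if_neg h]
    by_cases hp : p ∈ s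
    · simp only [Eop, if_pos hp, sDxi]
      by_cases he : s.erase p = {q}
      · exfalso
        apply h
        rw [← Finset.insert_erase hp, he]
      · rw [if_neg he, mul_zero]
    · simp [Eop, hp]

/-- wedging with `dx_j ∧ dξ_j` equals the composition of the two creation operators. -/
lemma wedge_pair (j : Fin n) (u : SForm n) :
    wedge (wedge (sDx n j) (sDxi n j)) u = Eop (dxI n j) (Eop (dxiI n j) u) := by
  rw [wedge_dx_dxi]
  funext s
  set p := dxI n j
  set q := dxiI n j
  have hpq : p < q := dxI_lt_dxiI j j
  have hpq' : p ≠ q := ne_of_lt hpq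
  unfold wedge
  have h : ∀ a ∈ s.powerset,
      (-1 : ℝ) ^ (((a ×ˢ (s \ a)).filter fun q' => q'.2 < q'.1).card) *
          (if a = {p, q} then (1 : ℝ) else 0) * u (s \ a)
        = if a = {p, q} then
            ((-1 : ℝ) ^ (cnt p (s \ ({p, q} : Finset (Fin (2 * n)))) +
              cnt q (s \ ({p, q} : Finset (Fin (2 * n))))) * u (s \ ({p, q} : Finset (Fin (2 * n))))) else 0 := by
    intro a _
    by_cases hak : a = {p, q}
    · subst hak
      rw [if_pos rfl, if_pos rfl, mul_one, card_prod_filter]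
      rw [Finset.sum_insert (by simpa using hpq'), Finset.sum_singleton]
    · simp [hak]
  rw [Finset.sum_congr rfl h, Finset.sum_ite_eq' s.powerset ({p, q} : Finset (Fin (2 * n)))]
  simp only [Finset.mem_powerset, Finset.insert_subset_iff, Finset.singleton_subset_iff]
  by_cases hp : p ∈ s
  · by_cases hq : q ∈ s
    · rw [if_pos ⟨hp, hq⟩]
      have hq' : q ∈ s.erase p := Finset.mem_erase_of_ne_of_mem (Ne.symm hpq') hq
      simp only [Eop, if_pos hp, if_pos hq']
      have hset : s \ ({p, q} : Finset (Fin (2 * n))) = (s.erase p).erase q := by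
        ext z
        simp only [Finset.mem_sdiff, Finset.mem_insert, Finset.mem_singleton, Finset.mem_erase]
        tauto
      have e1 : cnt p (s \ ({p, q} : Finset (Fin (2 * n)))) = cnt p s := by
        rw [hset, Finset.erase_right_comm, cnt_erase_self, cnt, cnt, Finset.filter_erase,
          Finset.erase_eq_of_notMem]
        simp only [Finset.mem_filter]
        rintro ⟨-, hlt⟩
        exact absurd hlt (not_lt.2 (le_of_lt hpq))
      have e2 : cnt q (s \ ({p, q} : Finset (Fin (2 * n)))) = cnt q (s.erase p) := by
        rw [hset, cnt_erase_self]
      rw [e1, e2, hset, pow_add]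
      ring
    · rw [if_neg (by tauto)]
      have hq' : q ∉ s.erase p := fun h' => hq (Finset.mem_of_mem_erase h')
      simp [Eop, hp, hq']
  · rw [if_neg (by tauto)]
    simp [Eop, hp]

lemma wedge_sum_left {ι : Type*} (A : Finset ι) (f : ι → SForm n) (y : SForm n) :
    wedge (∑ i ∈ A, f i) y = ∑ i ∈ A, wedge (f i) y := by
  funext s
  simp only [wedge, Finset.sum_apply, Finset.sum_mul, Finset.mul_sum]
  rw [Finset.sum_comm]

lemma Lop_eq (u : SForm n) :
    Lop n u = ∑ j : Fin n, Eop (dxI n j) (Eop (dxiI n j) u) := by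
  rw [Lop, omegaF, wedge_sum_left]
  exact Finset.sum_congr rfl fun j _ => wedge_pair j u

lemma Iop_sum {ι : Type*} (k : Fin (2 * n)) (A : Finset ι) (f : ι → SForm n) :
    Iop k (∑ i ∈ A, f i) = ∑ i ∈ A, Iop k (f i) := by
  funext t
  by_cases h : k ∈ t <;> simp [Iop, h, Finset.mul_sum]

lemma Eop_neg (p : Fin (2 * n)) (v : SForm n) : Eop p (-v) = -(Eop p v) := by
  funext s
  by_cases h : p ∈ s <;> simp [Eop, h]

lemma IEE_ne {k p q : Fin (2 * n)} (hkp : k ≠ p) (hkq : k ≠ q) (u : SForm n) :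
    Iop k (Eop p (Eop q u)) = Eop p (Eop q (Iop k u)) := by
  rw [I_E_ne hkp, I_E_ne hkq, Eop_neg, neg_neg]

lemma IEE_eq {k p : Fin (2 * n)} (hkp : k ≠ p) (u : SForm n) :
    Iop k (Eop p (Eop k u)) = Eop p (Eop k (Iop k u)) - Eop p u := by
  rw [I_E_ne hkp, I_E_same, Eop_sub, neg_sub]

lemma IEE_eq2 {k q : Fin (2 * n)} (hkq : k ≠ q) (u : SForm n) :
    Iop k (Eop k (Eop q u)) = Eop k (Eop q (Iop k u)) + Eop q u := by
  rw [I_E_same, I_E_ne hkq, Eop_neg, sub_neg_eq_add, add_comm]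

lemma comm_dxi (i : Fin n) (u : SForm n) :
    Iop (dxiI n i) (Lop n u) - Lop n (Iop (dxiI n i) u) = (-1 : ℝ) • Eop (dxI n i) u := by
  rw [Lop_eq, Lop_eq (Iop (dxiI n i) u), Iop_sum, ← Finset.sum_sub_distrib]
  have h : ∀ j ∈ (Finset.univ : Finset (Fin n)),
      (Iop (dxiI n i) (Eop (dxI n j) (Eop (dxiI n j) u))
        - Eop (dxI n j) (Eop (dxiI n j) (Iop (dxiI n i) u)))
      = if j = i then (-1 : ℝ) • Eop (dxI n i) u else 0 := by
    intro j _
    by_cases hji : j = i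
    · subst hji
      rw [IEE_eq (Ne.symm (dxI_ne_dxiI j j)), if_pos rfl, sub_sub_cancel_left, neg_one_smul]
    · have hkq : dxiI n i ≠ dxiI n j := fun h' => hji (dxiI_inj h'.symm)
      rw [IEE_ne (Ne.symm (dxI_ne_dxiI j i)) hkq, sub_self, if_neg hji]
  rw [Finset.sum_congr rfl h, Finset.sum_ite_eq' Finset.univ i]
  simp

lemma comm_dx (i : Fin n) (u : SForm n) :
    Iop (dxI n i) (Lop n u) - Lop n (Iop (dxI n i) u) = (1 : ℝ) • Eop (dxiI n i) u := by
  rw [Lop_eq, Lop_eq (Iop (dxI n i) u), Iop_sum, ← Finset.sum_sub_distrib]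
  have h : ∀ j ∈ (Finset.univ : Finset (Fin n)),
      (Iop (dxI n i) (Eop (dxI n j) (Eop (dxiI n j) u))
        - Eop (dxI n j) (Eop (dxiI n j) (Iop (dxI n i) u)))
      = if j = i then (1 : ℝ) • Eop (dxiI n i) u else 0 := by
    intro j _
    by_cases hji : j = i
    · subst hji
      rw [IEE_eq2 (dxI_ne_dxiI j j), if_pos rfl, add_sub_cancel_left, one_smul]
    · have hkp : dxI n i ≠ dxI n j := fun h' => hji (dxI_inj h'.symm)
      rw [IEE_ne hkp (dxI_ne_dxiI i j), sub_self, if_neg hji]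
  rw [Finset.sum_congr rfl h, Finset.sum_ite_eq' Finset.univ i]
  simp

lemma sip_sub_right (x y y' : SForm n) : sip x (y - y') = sip x y - sip x y' := by
  rw [sip_comm, sip_sub_left, sip_comm y x, sip_comm y' x]

lemma sip_sum_right {ι : Type*} (A : Finset ι) (x : SForm n) (f : ι → SForm n) :
    sip x (∑ i ∈ A, f i) = ∑ i ∈ A, sip x (f i) := by
  rw [sip_comm, sip_sum_left]
  exact Finset.sum_congr rfl fun i _ => sip_comm _ _

lemma sip_zero_right (x : SForm n) : sip x 0 = 0 := by simp [sip]

lemma Iop_zero (k : Fin (2 * n)) : Iop k (0 : SForm n) = 0 := by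
  funext t
  simp [Iop]

/-- `sip` as a bilinear map. -/
def sipL : SForm n →ₗ[ℝ] SForm n →ₗ[ℝ] ℝ :=
  LinearMap.mk₂ ℝ sip
    (fun x x' y => by simp [sip, add_mul, Finset.sum_add_distrib])
    (fun c x y => by simp [sip, Finset.mul_sum, mul_assoc])
    (fun x y y' => by simp [sip, mul_add, Finset.sum_add_distrib])
    (fun c x y => by
      simp only [sip, Pi.smul_apply, smul_eq_mul, Finset.mul_sum]
      exact Finset.sum_congr rfl fun s _ => by ring)

/-- `sip` as a continuous bilinear map. -/
def sipCLM : SForm n →L[ℝ] SForm n →L[ℝ] ℝ :=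
  LinearMap.toContinuousLinearMap
    { toFun := fun x => LinearMap.toContinuousLinearMap (sipL x)
      map_add' := fun x y => by
        show LinearMap.toContinuousLinearMap (sipL (x + y)) = _
        rw [map_add, map_add]
      map_smul' := fun c x => by
        show LinearMap.toContinuousLinearMap (sipL (c • x))
          = c • LinearMap.toContinuousLinearMap (sipL x)
        rw [_root_.map_smul, _root_.map_smul] }

lemma sipCLM_apply (x y : SForm n) : sipCLM x y = sip x y := rfl

/-- `Iop` as a linear map. -/
def IopL (k : Fin (2 * n)) : SForm n →ₗ[ℝ] SForm n where
  toFun := Iop k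
  map_add' := fun u v => by
    funext t
    by_cases h : k ∈ t <;> simp [Iop, h, mul_add]
  map_smul' := fun c u => by
    funext t
    by_cases h : k ∈ t <;> simp [Iop, h] <;> ring

/-- `Iop` as a continuous linear map. -/
def IopCLM (k : Fin (2 * n)) : SForm n →L[ℝ] SForm n :=
  LinearMap.toContinuousLinearMap (IopL k)

lemma IopCLM_coe (k : Fin (2 * n)) : ⇑(IopCLM k : SForm n →L[ℝ] SForm n) = Iop k := rfl

lemma IopCLM_apply (k : Fin (2 * n)) (x : SForm n) : IopCLM k x = Iop k x := rfl

lemma fderiv_Tcomp (T : SForm n →L[ℝ] SForm n) {f : (Fin n → ℝ) → SForm n}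
    (hf : Differentiable ℝ f) (x v : Fin n → ℝ) :
    fderiv ℝ (fun y => T (f y)) x v = T (fderiv ℝ f x v) := by
  have h := (T.hasFDerivAt.comp x (hf x).hasFDerivAt).fderiv
  calc fderiv ℝ (fun y => T (f y)) x v = (T.comp (fderiv ℝ f x)) v := by rw [← h]; rfl
    _ = T (fderiv ℝ f x v) := rfl

open MeasureTheory in
lemma cont_integrable {f g : (Fin n → ℝ) → SForm n} (hf : Continuous f) (hg : Continuous g)
    {K : Set (Fin n → ℝ)} (hK : IsCompact K) (h0 : ∀ x ∉ K, g x = 0) :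
    Integrable (fun x => sip (f x) (g x)) (volume : Measure (Fin n → ℝ)) := by
  apply Continuous.integrable_of_hasCompactSupport
  · unfold sip
    exact continuous_finset_sum _ fun s _ =>
      (((continuous_apply s).comp hf).mul ((continuous_apply s).comp hg))
  · exact HasCompactSupport.intro hK fun x hx => by rw [h0 x hx, sip_zero_right]

end Aux

section MainAux

open MeasureTheory

lemma aux_main {n : ℕ} (Lam : SForm n →ₗ[ℝ] SForm n)
    (hLam : ∀ x y : SForm n, sip (Lop n x) y = sip x (Lam y))
    (α β : (Fin n → ℝ) → SForm n)
    (hα : ContDiff ℝ (⊤ : ℕ∞) α) (hαc : HasCompactSupport α)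
    (hβ : ContDiff ℝ (⊤ : ℕ∞) β) (hβc : HasCompactSupport β)
    (w1 w2 : Fin n → SForm n) (σ τ : Fin n → Fin (2 * n)) (ε : ℝ)
    (hw1 : ∀ (i : Fin n) (z : SForm n), wedge (w1 i) z = Eop (σ i) z)
    (hw2 : ∀ (i : Fin n) (z : SForm n), wedge (w2 i) z = Eop (τ i) z)
    (hcomm : ∀ (i : Fin n) (u : SForm n),
      Iop (τ i) (Lop n u) - Lop n (Iop (τ i) u) = ε • Eop (σ i) u) :
    (∫ x : Fin n → ℝ, sip (α x)
        (Lam (∑ i : Fin n, wedge (w2 i) (fderiv ℝ β x (Pi.single i 1)))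
          - ∑ i : Fin n, wedge (w2 i) (fderiv ℝ (fun y => Lam (β y)) x (Pi.single i 1))))
      = -ε * ∫ x : Fin n → ℝ, sip (∑ i : Fin n, wedge (w1 i) (fderiv ℝ α x (Pi.single i 1))) (β x) := by
  have hαd : Differentiable ℝ α := hα.differentiable (by simp)
  have hβd : Differentiable ℝ β := hβ.differentiable (by simp)
  set LamC : SForm n →L[ℝ] SForm n := LinearMap.toContinuousLinearMap Lam with hLamC
  have hLamfun : (fun y => Lam (β y)) = (fun y => LamC (β y)) := rfl
  set g : Fin n → (Fin n → ℝ) → SForm n := fun i x => IopCLM (σ i) (β x) with hg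
  have hgapp : ∀ (i : Fin n) (x : Fin n → ℝ), g i x = Iop (σ i) (β x) := fun i x => rfl
  have hgsmooth : ∀ i, ContDiff ℝ (⊤ : ℕ∞) (g i) := fun i =>
    ((IopCLM (σ i)).contDiff).comp hβ
  have hgdiff : ∀ i, Differentiable ℝ (g i) := fun i => (hgsmooth i).differentiable (by simp)
  have hgcont : ∀ i, Continuous (g i) := fun i => (hgsmooth i).continuous
  have hgfd : ∀ (i : Fin n) (x : Fin n → ℝ),
      fderiv ℝ (g i) x (Pi.single i 1) = IopCLM (σ i) (fderiv ℝ β x (Pi.single i 1)) :=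
    fun i x => fderiv_Tcomp (IopCLM (σ i)) hβd x (Pi.single i 1)
  -- pointwise identity for the left integrand
  have hA : ∀ x : Fin n → ℝ,
      sip (α x) (Lam (∑ i : Fin n, wedge (w2 i) (fderiv ℝ β x (Pi.single i 1)))
          - ∑ i : Fin n, wedge (w2 i) (fderiv ℝ (fun y => Lam (β y)) x (Pi.single i 1)))
      = ∑ i : Fin n, ε * sipCLM (α x) (fderiv ℝ (g i) x (Pi.single i 1)) := by
    intro x
    rw [sip_sub_right]
    have h1 : sip (α x) (Lam (∑ i : Fin n, wedge (w2 i) (fderiv ℝ β x (Pi.single i 1))))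
        = ∑ i : Fin n, sip (Iop (τ i) (Lop n (α x))) (fderiv ℝ β x (Pi.single i 1)) := by
      rw [← hLam, sip_sum_right]
      refine Finset.sum_congr rfl fun i _ => ?_
      rw [hw2, sip_comm, sip_Eop, sip_comm]
    have h2 : sip (α x) (∑ i : Fin n, wedge (w2 i) (fderiv ℝ (fun y => Lam (β y)) x (Pi.single i 1)))
        = ∑ i : Fin n, sip (Lop n (Iop (τ i) (α x))) (fderiv ℝ β x (Pi.single i 1)) := by
      rw [sip_sum_right]
      refine Finset.sum_congr rfl fun i _ => ?_
      have hd : fderiv ℝ (fun y => Lam (β y)) x (Pi.single i 1)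
          = Lam (fderiv ℝ β x (Pi.single i 1)) := by
        rw [hLamfun]
        exact fderiv_Tcomp LamC hβd x (Pi.single i 1)
      rw [hd, hw2, sip_comm, sip_Eop, sip_comm, hLam]
    rw [h1, h2, ← Finset.sum_sub_distrib]
    refine Finset.sum_congr rfl fun i _ => ?_
    rw [← sip_sub_left, hcomm, sip_smul_left, sip_Eop, hgfd i x, sipCLM_apply, IopCLM_apply]
  have hfun : (fun x : Fin n → ℝ => sip (α x)
      (Lam (∑ i : Fin n, wedge (w2 i) (fderiv ℝ β x (Pi.single i 1)))
        - ∑ i : Fin n, wedge (w2 i) (fderiv ℝ (fun y => Lam (β y)) x (Pi.single i 1))))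
      = fun x => ∑ i : Fin n, ε * sipCLM (α x) (fderiv ℝ (g i) x (Pi.single i 1)) := funext hA
  -- continuity facts
  have hαcont : Continuous α := hα.continuous
  have hpdαcont : ∀ i : Fin n, Continuous (fun x => fderiv ℝ α x (Pi.single i 1)) :=
    fun i => (hα.continuous_fderiv (by simp)).clm_apply continuous_const
  have hpdgcont : ∀ i : Fin n, Continuous (fun x => fderiv ℝ (g i) x (Pi.single i 1)) :=
    fun i => ((hgsmooth i).continuous_fderiv (by simp)).clm_apply continuous_const
  -- support facts
  have hgsupp : ∀ i, ∀ x ∉ tsupport β, g i x = 0 := by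
    intro i x hx
    show IopCLM (σ i) (β x) = 0
    rw [image_eq_zero_of_notMem_tsupport hx]
    exact map_zero _
  have hgts : ∀ i, tsupport (g i) ⊆ tsupport β := by
    intro i
    apply closure_mono
    intro x hx
    by_contra hxs
    apply hx
    show IopCLM (σ i) (β x) = 0
    rw [Function.notMem_support.mp hxs]
    exact map_zero _
  have hpdgsupp : ∀ i, ∀ x ∉ tsupport β, fderiv ℝ (g i) x (Pi.single i 1) = 0 := by
    intro i x hx
    have h0 : fderiv ℝ (g i) x = 0 := by
      by_contra h
      exact hx (hgts i (support_fderiv_subset ℝ (Function.mem_support.mpr h)))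
    rw [h0, ContinuousLinearMap.zero_apply]
  -- integrability facts
  have I1 : ∀ i : Fin n, Integrable (fun x => sipCLM (α x) (fderiv ℝ (g i) x (Pi.single i 1)))
      (volume : Measure (Fin n → ℝ)) := by
    intro i
    simpa only [sipCLM_apply] using cont_integrable hαcont (hpdgcont i) hβc (hpdgsupp i)
  have I2 : ∀ i : Fin n, Integrable (fun x => sipCLM (fderiv ℝ α x (Pi.single i 1)) (g i x))
      (volume : Measure (Fin n → ℝ)) := by
    intro i
    simpa only [sipCLM_apply] using cont_integrable (hpdαcont i) (hgcont i) hβc (hgsupp i)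
  have I3 : ∀ i : Fin n, Integrable (fun x => sipCLM (α x) (g i x))
      (volume : Measure (Fin n → ℝ)) := by
    intro i
    simpa only [sipCLM_apply] using cont_integrable hαcont (hgcont i) hβc (hgsupp i)
  -- integration by parts for each i
  have IBP : ∀ i : Fin n,
      (∫ x : Fin n → ℝ, sipCLM (α x) (fderiv ℝ (g i) x (Pi.single i 1)))
        = -∫ x : Fin n → ℝ, sipCLM (fderiv ℝ α x (Pi.single i 1)) (g i x) := fun i =>
    integral_bilinear_fderiv_right_eq_neg_left_of_integrable
      (B := sipCLM) (I2 i) (I1 i) (I3 i) (fun x _ => hαd x) (fun x _ => hgdiff i x)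
  -- now compute
  rw [hfun, integral_finset_sum _ (fun i _ => (I1 i).const_mul ε)]
  have hmid : ∀ i : Fin n,
      (∫ x : Fin n → ℝ, ε * sipCLM (α x) (fderiv ℝ (g i) x (Pi.single i 1)))
      = ε * -∫ x : Fin n → ℝ, sipCLM (fderiv ℝ α x (Pi.single i 1)) (g i x) := by
    intro i
    rw [integral_const_mul, IBP i]
  rw [Finset.sum_congr rfl fun i _ => hmid i]
  have hR : (∫ x : Fin n → ℝ, sip (∑ i : Fin n, wedge (w1 i) (fderiv ℝ α x (Pi.single i 1))) (β x))
      = ∑ i : Fin n, ∫ x : Fin n → ℝ, sipCLM (fderiv ℝ α x (Pi.single i 1)) (g i x) := by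
    have hfun2 : (fun x : Fin n → ℝ =>
        sip (∑ i : Fin n, wedge (w1 i) (fderiv ℝ α x (Pi.single i 1))) (β x))
        = fun x => ∑ i : Fin n, sipCLM (fderiv ℝ α x (Pi.single i 1)) (g i x) := by
      funext x
      rw [sip_sum_left]
      refine Finset.sum_congr rfl fun i _ => ?_
      rw [hw1, sip_Eop, sipCLM_apply, hgapp i x]
    rw [hfun2, integral_finset_sum _ (fun i _ => I2 i)]
  rw [hR, Finset.mul_sum]
  refine Finset.sum_congr rfl fun i _ => ?_
  ring

end MainAux


/-- for smooth compactly supported super forms `α, β` on `ℝⁿ`,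
`∫ ⟨dα, β⟩ = ∫ ⟨α, [Λ, d#]β⟩` and `∫ ⟨d#α, β⟩ = −∫ ⟨α, [Λ, d]β⟩`: the formal
`L²`-adjoint of `d` is `[Λ, d#]` and that of `d#` is `−[Λ, d]`, where `Λ` is the
adjoint of `L = ω ∧ ·` acting pointwise. -/
theorem formal_adjoints_of_d_and_dsharp (n : ℕ) (hn : 1 ≤ n)
    (Lam : SForm n →ₗ[ℝ] SForm n)
    (hLam : ∀ x y : SForm n, sip (Lop n x) y = sip x (Lam y))
    (α β : (Fin n → ℝ) → SForm n)
    (hα : ContDiff ℝ (⊤ : ℕ∞) α) (hαc : HasCompactSupport α)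
    (hβ : ContDiff ℝ (⊤ : ℕ∞) β) (hβc : HasCompactSupport β) :
    (∫ x : Fin n → ℝ, sip (dS n α x) (β x))
        = ∫ x : Fin n → ℝ, sip (α x) (Lam (dSh n β x) - dSh n (fun y => Lam (β y)) x) ∧
    (∫ x : Fin n → ℝ, sip (dSh n α x) (β x))
        = -∫ x : Fin n → ℝ, sip (α x) (Lam (dS n β x) - dS n (fun y => Lam (β y)) x) := by
  constructor
  · have h := aux_main Lam hLam α β hα hαc hβ hβc (sDx n) (sDxi n) (dxI n) (dxiI n) (-1)
      (fun i z => wedge_sDx i z) (fun i z => wedge_sDxi i z) (fun i u => comm_dxi i u)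
    simp only [dS, dSh]
    rw [h]
    norm_num
  · have h := aux_main Lam hLam α β hα hαc hβ hβc (sDxi n) (sDx n) (dxiI n) (dxI n) 1
      (fun i z => wedge_sDxi i z) (fun i z => wedge_sDx i z) (fun i u => comm_dx i u)
    simp only [dS, dSh]
    rw [h]
    norm_num
end
end
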